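/- arXiv:2605.10682 — 8 statements merged into one kernel-verified Lean document; each statement's English description precedes it below -/
import Mathlib

section
/- Let m, d ≥ 1, let μ ∈ ℝ, and let δ₁, …, δ_d be points of the probability simplex Δ_{m−1} ⊆ ℝ^m. Suppose that for every sign vector η ∈ {−1,+1}^d there exists a vector b_η ∈ ℝ^m such that for each j ∈ {1,…,d} one has δ_jᵀ b_η > μ if and only if η_j = +1. Then d ≤ m. -/
open scoped Matrix

/-- The probability simplex `Δ_{m-1} ⊆ ℝ^m`. -/
def probSimplex (m : ℕ) : Set (Fin m → ℝ) :=
  {x | (∀ i, 0 ≤ x i) ∧ ∑ i, x i = 1}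

/-- if points `δ₁, …, δ_d` of the probability simplex `Δ_{m-1}` are shattered
by the threshold tests `x ↦ (xᵀ b > μ)`, i.e. for every sign vector `η ∈ {±1}^d` some
`b_η ∈ ℝ^m` realizes exactly the pattern `η`, then `d ≤ m`. -/
theorem shattered_simplex_points_le (m d : ℕ) (hm : 1 ≤ m) (hd : 1 ≤ d) (μ : ℝ)
    (δ : Fin d → Fin m → ℝ) (hδ : ∀ j, δ j ∈ probSimplex m)
    (h : ∀ η : Fin d → ℝ, (∀ j, η j = 1 ∨ η j = -1) →
      ∃ b : Fin m → ℝ, ∀ j, (dotProduct (δ j) b > μ ↔ η j = 1)) :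
    d ≤ m := by
  by_contra hcon
  push_neg at hcon
  -- the δ j are linearly dependent
  have hnli : ¬ LinearIndependent ℝ δ := by
    intro hli
    have := hli.fintype_card_le_finrank
    simp [Module.finrank_fintype_fun_eq_card] at this
    omega
  obtain ⟨c, hsum, i0, hi0⟩ := Fintype.not_linearIndependent_iff.mp hnli
  -- pointwise form of the dependence
  have hpt : ∀ i, ∑ j, c j * δ j i = 0 := by
    intro i
    have := congrFun hsum i
    simpa using this
  -- coefficients sum to zero
  have hcsum : ∑ j, c j = 0 := by
    have : ∑ j, c j * ∑ i, δ j i = 0 := by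
      calc ∑ j, c j * ∑ i, δ j i = ∑ j, ∑ i, c j * δ j i := by
            simp [Finset.mul_sum]
        _ = ∑ i, ∑ j, c j * δ j i := Finset.sum_comm
        _ = 0 := by simp [hpt]
    simpa [(fun j => (hδ j).2)] using this
  -- there is a positive coefficient
  have hpos : ∃ j, 0 < c j := by
    by_contra hnp
    push_neg at hnp
    have hall : ∀ j ∈ Finset.univ, c j = 0 := by
      intro j _
      have := (Finset.sum_eq_zero_iff_of_nonpos (fun j _ => hnp j)).mp hcsum
      exact this j (Finset.mem_univ j)
    exact hi0 (hall i0 (Finset.mem_univ i0))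
  obtain ⟨j0, hj0⟩ := hpos
  -- realize the sign pattern of c
  set η : Fin d → ℝ := fun j => if 0 < c j then 1 else -1 with hη
  obtain ⟨b, hb⟩ := h η (fun j => by by_cases hc : 0 < c j <;> simp [hη, hc])
  have hbiff : ∀ j, dotProduct (δ j) b > μ ↔ 0 < c j := by
    intro j
    rw [hb j]
    by_cases hc : 0 < c j <;> simp [hη, hc] <;> norm_num
  -- the contradiction: ∑ c j * (δ j ⬝ᵥ b - μ) is both 0 and > 0
  have hzero : ∑ j, c j * (dotProduct (δ j) b - μ) = 0 := by
    have h1 : ∑ j, c j * dotProduct (δ j) b = 0 := by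
      calc ∑ j, c j * dotProduct (δ j) b
          = ∑ j, ∑ i, c j * (δ j i * b i) := by
            simp [dotProduct, Finset.mul_sum]
        _ = ∑ i, (∑ j, c j * δ j i) * b i := by
            rw [Finset.sum_comm]; congr 1; ext i; rw [Finset.sum_mul]; exact Finset.sum_congr rfl (fun j _ => by ring)
        _ = 0 := by simp [hpt]
    calc ∑ j, c j * (dotProduct (δ j) b - μ)
        = ∑ j, c j * dotProduct (δ j) b - μ * ∑ j, c j := by
          rw [Finset.mul_sum, ← Finset.sum_sub_distrib]; congr 1; ext j; ring
      _ = 0 := by rw [h1, hcsum]; ring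
  have hposum : 0 < ∑ j, c j * (dotProduct (δ j) b - μ) := by
    apply Finset.sum_pos'
    · intro j _
      by_cases hc : 0 < c j
      · have := (hbiff j).mpr hc
        nlinarith
      · have h1 : c j ≤ 0 := le_of_not_gt hc
        have h2 : dotProduct (δ j) b - μ ≤ 0 := by
          have := (hbiff j).not.mpr hc
          push_neg at this
          linarith [this]
        nlinarith
    · exact ⟨j0, Finset.mem_univ j0, by
        have := (hbiff j0).mpr hj0
        nlinarith⟩
  linarith
end

section
/- Let 𝒜 be a (c,q)-1QCFA over a finite alphabet Σ. Then there exists a generalized finite automaton G with cq² states over Σ such that f_G(w) = f_𝒜(w) for every word w ∈ Σ*. -/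
open scoped Matrix ComplexOrder

/-- A one-way finite automaton with `c` classical states and a `q`-dimensional quantum
register ((c,q)-1QCFA): deterministic classical control, initial density matrix, a quantum
channel in Kraus form for each (classical state, symbol) pair, and an accepting projector. -/
structure QCFA (α : Type) (c q : ℕ) where
  s0 : Fin c
  δ : Fin c → α → Fin c
  ρ0 : Matrix (Fin q) (Fin q) ℂ
  ρ0_psd : ρ0.PosSemidef
  ρ0_tr : ρ0.trace = 1
  κ : Fin c → α → ℕ
  Kr : (s : Fin c) → (a : α) → Fin (κ s a) → Matrix (Fin q) (Fin q) ℂ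
  kraus : ∀ s a, ∑ i, (Kr s a i)ᴴ * Kr s a i = 1
  Pacc : Matrix (Fin q) (Fin q) ℂ
  Pacc_proj : Pacc * Pacc = Pacc
  Pacc_herm : Paccᴴ = Pacc

/-- The quantum channel `Φ_{s,σ}` of a 1QCFA, in Kraus form. -/
noncomputable def QCFA.chan {α : Type} {c q : ℕ} (A : QCFA α c q) (s : Fin c) (a : α)
    (ρ : Matrix (Fin q) (Fin q) ℂ) : Matrix (Fin q) (Fin q) ℂ :=
  ∑ i, A.Kr s a i * ρ * (A.Kr s a i)ᴴ

/-- The classical–quantum configuration of a 1QCFA after reading a word. -/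
noncomputable def QCFA.run {α : Type} {c q : ℕ} (A : QCFA α c q) (w : List α) :
    Fin c × Matrix (Fin q) (Fin q) ℂ :=
  w.foldl (fun p a => (A.δ p.1 a, A.chan p.1 a p.2)) (A.s0, A.ρ0)

/-- Acceptance probability of a 1QCFA: `Tr(P_acc ρ_k)`. -/
noncomputable def QCFA.accProb {α : Type} {c q : ℕ} (A : QCFA α c q) (w : List α) : ℝ :=
  (Matrix.trace (A.Pacc * (A.run w).2)).re

/-- A generalized finite automaton with `k` states over the alphabet `α`. -/
structure GFA (α : Type) (k : ℕ) where
  u : Fin k → ℝ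
  A : α → Matrix (Fin k) (Fin k) ℝ
  v : Fin k → ℝ

/-- The value of a GFA on a word: `u A_{σ₁} ⋯ A_{σ_m} v`. -/
noncomputable def GFA.val {α : Type} {k : ℕ} (G : GFA α k) (w : List α) : ℝ :=
  dotProduct (Matrix.vecMul G.u ((w.map G.A).prod)) G.v

variable {q : ℕ}

noncomputable def coordFn (ρ : Matrix (Fin q) (Fin q) ℂ) (p : Fin q × Fin q) : ℝ :=
  if p.1 ≤ p.2 then (ρ p.1 p.2).re else (ρ p.1 p.2).im

noncomputable def reconFn (x : Fin q × Fin q → ℝ) : Matrix (Fin q) (Fin q) ℂ :=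
  fun j k =>
    if j = k then (x (j,k) : ℂ)
    else if j < k then (x (j,k) : ℂ) - (x (k,j) : ℂ) * Complex.I
    else (x (k,j) : ℂ) + (x (j,k) : ℂ) * Complex.I

noncomputable def reconL : (Fin q × Fin q → ℝ) →ₗ[ℝ] Matrix (Fin q) (Fin q) ℂ where
  toFun := reconFn
  map_add' x y := by
    funext j k
    simp only [reconFn, Matrix.add_apply, Pi.add_apply]
    split_ifs <;> push_cast <;> ring
  map_smul' r x := by
    funext j k
    simp only [reconFn, Matrix.smul_apply, Pi.smul_apply, smul_eq_mul, RingHom.id_apply,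
      Complex.real_smul]
    split_ifs <;> push_cast <;> ring

noncomputable def coordL : Matrix (Fin q) (Fin q) ℂ →ₗ[ℝ] (Fin q × Fin q → ℝ) where
  toFun := coordFn
  map_add' x y := by
    funext p
    simp only [coordFn, Matrix.add_apply, Pi.add_apply]
    split_ifs <;> simp
  map_smul' r x := by
    funext p
    simp only [coordFn, Matrix.smul_apply, Pi.smul_apply, smul_eq_mul, RingHom.id_apply]
    split_ifs <;> simp [Complex.smul_re, Complex.smul_im]

theorem recon_coord {ρ : Matrix (Fin q) (Fin q) ℂ} (h : ρ.IsHermitian) :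
    reconFn (coordFn ρ) = ρ := by
  funext j k
  have hjk : ρ k j = star (ρ j k) := by
    conv_lhs => rw [← h]
    rfl
  simp only [reconFn, coordFn]
  rcases lt_trichotomy j k with hlt | heq | hgt
  · rw [if_neg hlt.ne, if_pos hlt]
    rw [if_pos hlt.le, if_neg (not_le.mpr hlt)]
    rw [hjk]
    apply Complex.ext <;> simp
  · subst heq
    rw [if_pos rfl, if_pos le_rfl]
    have : (ρ j j).im = 0 := by
      have := hjk
      rw [Complex.ext_iff] at this
      simp at this
      linarith [this]
    apply Complex.ext <;> simp [this]
  · rw [if_neg hgt.ne', if_neg (not_lt.mpr hgt.le)]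
    rw [if_pos hgt.le, if_neg (not_le.mpr hgt)]
    rw [hjk]
    apply Complex.ext <;> simp
-- channel is ℝ-linear
noncomputable def chanL {α : Type} {c q : ℕ} (A : QCFA α c q) (s : Fin c) (a : α) :
    Matrix (Fin q) (Fin q) ℂ →ₗ[ℝ] Matrix (Fin q) (Fin q) ℂ where
  toFun := A.chan s a
  map_add' x y := by
    simp [QCFA.chan, Matrix.mul_add, Matrix.add_mul, Finset.sum_add_distrib]
  map_smul' r x := by
    simp [QCFA.chan, Matrix.mul_smul, Matrix.smul_mul, Finset.smul_sum]

theorem chan_isHermitian {α : Type} {c q : ℕ} (A : QCFA α c q) (s : Fin c) (a : α)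
    {ρ : Matrix (Fin q) (Fin q) ℂ} (h : ρ.IsHermitian) : (A.chan s a ρ).IsHermitian := by
  unfold QCFA.chan Matrix.IsHermitian
  rw [Matrix.conjTranspose_sum]
  refine Finset.sum_congr rfl fun i _ => ?_
  rw [Matrix.conjTranspose_mul, Matrix.conjTranspose_mul, Matrix.conjTranspose_conjTranspose,
    h.eq, Matrix.mul_assoc]

theorem run_isHermitian {α : Type} {c q : ℕ} (A : QCFA α c q) (w : List α) :
    (A.run w).2.IsHermitian := by
  have key : ∀ (w : List α) (p : Fin c × Matrix (Fin q) (Fin q) ℂ), p.2.IsHermitian →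
      (w.foldl (fun p a => (A.δ p.1 a, A.chan p.1 a p.2)) p).2.IsHermitian := by
    intro w
    induction w with
    | nil => intro p h; exact h
    | cons a w ih => intro p h; exact ih _ (chan_isHermitian A _ _ h)
  exact key w _ A.ρ0_psd.1

variable {α : Type} {c : ℕ}

-- the per-(state,symbol) linear map on coordinates
noncomputable def Fmap (A : QCFA α c q) (s : Fin c) (a : α) :
    (Fin q × Fin q → ℝ) →ₗ[ℝ] (Fin q × Fin q → ℝ) :=
  coordL.comp ((chanL A s a).comp reconL)

noncomputable def Mmat (A : QCFA α c q) (s : Fin c) (a : α) :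
    Matrix (Fin q × Fin q) (Fin q × Fin q) ℝ :=
  (LinearMap.toMatrix' (Fmap A s a))ᵀ

theorem vecMul_Mmat (A : QCFA α c q) (s : Fin c) (a : α) (x : Fin q × Fin q → ℝ) :
    Matrix.vecMul x (Mmat A s a) = Fmap A s a x := by
  rw [Mmat, Matrix.vecMul_transpose, ← Matrix.toLin'_apply, Matrix.toLin'_toMatrix']

-- GFA data on the product index set
noncomputable def Bmat (A : QCFA α c q) (a : α) :
    Matrix (Fin c × (Fin q × Fin q)) (Fin c × (Fin q × Fin q)) ℝ :=
  fun p p' => if p'.1 = A.δ p.1 a then Mmat A p.1 a p.2 p'.2 else 0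

noncomputable def Uvec (A : QCFA α c q) : Fin c × (Fin q × Fin q) → ℝ :=
  fun p => if p.1 = A.s0 then coordFn A.ρ0 p.2 else 0

noncomputable def Vvec (A : QCFA α c q) : Fin c × (Fin q × Fin q) → ℝ :=
  fun p => (Matrix.trace (A.Pacc * reconFn (fun r => if p.2 = r then 1 else 0))).re

noncomputable def Xvec (A : QCFA α c q) (w : List α) : Fin c × (Fin q × Fin q) → ℝ :=
  fun p => if p.1 = (A.run w).1 then coordFn (A.run w).2 p.2 else 0

theorem run_append (A : QCFA α c q) (w : List α) (a : α) :
    A.run (w ++ [a]) = (A.δ (A.run w).1 a, A.chan (A.run w).1 a (A.run w).2) := by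
  simp [QCFA.run, List.foldl_append]

noncomputable def Gfun (A : QCFA α c q) : (Fin q × Fin q → ℝ) →ₗ[ℝ] ℝ :=
  Complex.reLm.comp ((Matrix.traceLinearMap (Fin q) ℝ ℂ).comp
    ((LinearMap.mulLeft ℝ A.Pacc).restrictScalars ℝ |>.comp reconL))

theorem Gfun_apply (A : QCFA α c q) (x : Fin q × Fin q → ℝ) :
    Gfun A x = (Matrix.trace (A.Pacc * reconFn x)).re := rfl

theorem key_step (A : QCFA α c q) (w : List α) (a : α) :
    Matrix.vecMul (Xvec A w) (Bmat A a) = Xvec A (w ++ [a]) := by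
  funext p'
  obtain ⟨t, β'⟩ := p'
  have hF : Matrix.vecMul (coordFn (A.run w).2) (Mmat A (A.run w).1 a) =
      coordFn (A.chan (A.run w).1 a (A.run w).2) := by
    rw [vecMul_Mmat]
    show coordL ((chanL A (A.run w).1 a) (reconL (coordFn (A.run w).2))) = _
    simp only [reconL, LinearMap.coe_mk, AddHom.coe_mk]
    refine (congrArg (fun ρ => coordL (chanL A (A.run w).1 a ρ)) (recon_coord (run_isHermitian A w))).trans ?_
    rfl
  show ∑ i, Xvec A w i * Bmat A a i (t, β') = Xvec A (w ++ [a]) (t, β')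
  rw [Fintype.sum_prod_type]
  rw [Finset.sum_eq_single (A.run w).1]
  · trans (if t = A.δ (A.run w).1 a then
      Matrix.vecMul (coordFn (A.run w).2) (Mmat A (A.run w).1 a) β' else 0)
    · by_cases h : t = A.δ (A.run w).1 a
      · rw [if_pos h]
        simp [Xvec, Bmat, h, Matrix.vecMul, dotProduct]
      · rw [if_neg h]
        simp [Xvec, Bmat, h]
    · rw [hF]
      simp only [Xvec, run_append]
  · intro s _ hs
    simp [Xvec, if_neg hs]
  · intro h; exact absurd (Finset.mem_univ _) h

theorem key_prod (A : QCFA α c q) (w : List α) :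
    Matrix.vecMul (Uvec A) ((w.map (Bmat A)).prod) = Xvec A w := by
  induction w using List.reverseRecOn with
  | nil => simp [QCFA.run, Xvec, Uvec, Matrix.vecMul_one]; rfl
  | append_singleton w a ih =>
      rw [List.map_append, List.prod_append, List.map_singleton, List.prod_singleton,
        ← Matrix.vecMul_vecMul, ih, key_step]

-- trace functional
theorem dot_V (A : QCFA α c q) (w : List α) :
    dotProduct (Xvec A w) (Vvec A) = A.accProb w := by
  show ∑ i, Xvec A w i * Vvec A i = A.accProb w
  rw [Fintype.sum_prod_type]
  rw [Finset.sum_eq_single (A.run w).1]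
  · trans (Gfun A (coordFn (A.run w).2))
    · rw [LinearMap.pi_apply_eq_sum_univ (Gfun A) (coordFn (A.run w).2)]
      refine Finset.sum_congr rfl fun β _ => ?_
      simp only [Xvec, if_pos rfl, smul_eq_mul]
      rfl
    · rw [Gfun_apply, recon_coord (run_isHermitian A w)]
      rfl
  · intro s _ hs; simp [Xvec, if_neg hs]
  · intro h; exact absurd (Finset.mem_univ _) h

theorem prod_submatrix {k : ℕ} {ι : Type} [Fintype ι] [DecidableEq ι]
    (e : Fin k ≃ ι) (M : α → Matrix ι ι ℝ) (w : List α) :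
    (w.map (fun a => (M a).submatrix e e)).prod = ((w.map M).prod).submatrix e e := by
  induction w with
  | nil => simp [Matrix.submatrix_one_equiv]
  | cons a w ih =>
      simp only [List.map_cons, List.prod_cons, ih, Matrix.submatrix_mul_equiv]

/-- every (c,q)-1QCFA is exactly linearized by a GFA with `c·q²` states. -/
theorem qcfa_linearization (α : Type) [Fintype α] (c q : ℕ) (A : QCFA α c q) :
    ∃ G : GFA α (c * q ^ 2), ∀ w : List α, G.val w = A.accProb w := by
  have e : Fin (c * q ^ 2) ≃ (Fin c × (Fin q × Fin q)) :=
    (finCongr (by ring)).trans <|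
      (finProdFinEquiv (m := c) (n := q * q)).symm.trans
        (Equiv.prodCongr (Equiv.refl (Fin c)) (finProdFinEquiv (m := q) (n := q)).symm)
  refine ⟨⟨fun i => Uvec A (e i), fun a => (Bmat A a).submatrix e e, fun i => Vvec A (e i)⟩,
    fun w => ?_⟩
  have hU : (fun i => Uvec A (e i)) = Uvec A ∘ e := rfl
  have hV : (fun i => Vvec A (e i)) = Vvec A ∘ e := rfl
  rw [GFA.val]
  simp only [hU, hV]
  rw [prod_submatrix e (Bmat A) w, Matrix.submatrix_vecMul_equiv]
  have : (Uvec A ∘ e) ∘ e.symm = Uvec A := by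
    funext i; simp
  rw [this]
  have : (Matrix.vecMul (Uvec A) ((w.map (Bmat A)).prod)) ∘ e ⬝ᵥ (Vvec A ∘ e) =
      Matrix.vecMul (Uvec A) ((w.map (Bmat A)).prod) ⬝ᵥ Vvec A :=
    comp_equiv_dotProduct_comp_equiv _ _ _
  rw [this, key_prod, dot_V]
end

section
/- Let c ≥ 2 and q ≥ 2, let 𝒜 be a (c,q)-1QCFA over a finite alphabet Σ, and let λ ∈ ℝ be a strict cutpoint. Then there exists a one-way probabilistic finite automaton over the same alphabet Σ with at most 2cq²+6 states that recognizes the language {w ∈ Σ* : f_𝒜(w) > λ} with strict cutpoint 1/2. -/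
open scoped Matrix ComplexOrder


/-- A row-stochastic real square matrix. -/
def RowStochastic {m : ℕ} (M : Matrix (Fin m) (Fin m) ℝ) : Prop :=
  (∀ i j, 0 ≤ M i j) ∧ ∀ i, ∑ j, M i j = 1


/-- A one-way probabilistic finite automaton with `m` states over the alphabet `α`. -/
structure PFA (α : Type) (m : ℕ) where
  init : Fin m → ℝ
  trans : α → Matrix (Fin m) (Fin m) ℝ
  endm : Matrix (Fin m) (Fin m) ℝ
  acc : Fin m → ℝ
  init_nonneg : ∀ i, 0 ≤ init i
  init_sum : ∑ i, init i = 1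
  trans_stoch : ∀ a, RowStochastic (trans a)
  endm_stoch : RowStochastic endm
  acc01 : ∀ i, acc i = 0 ∨ acc i = 1

/-- Acceptance probability of a PFA on a word: `π P_{σ₁} ⋯ P_{σ_k} P_# f`. -/
noncomputable def PFA.accProb {α : Type} {m : ℕ} (P : PFA α m) (w : List α) : ℝ :=
  dotProduct (Matrix.vecMul P.init ((w.map P.trans).prod * P.endm)) P.acc


namespace QCFASim

variable {α : Type} {c q : ℕ}

/-- middle index type: real/imag parts of entries of the tagged density matrix, plus a
constant coordinate -/
abbrev MidT (c q : ℕ) := (Fin c × (Fin q × Fin q) × Bool) ⊕ Unit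

/-- real encoding of a classical-quantum configuration -/
noncomputable def enc (p : Fin c × Matrix (Fin q) (Fin q) ℂ) : MidT c q → ℝ
  | .inl (t, ij, b) => if t = p.1 then (if b then (p.2 ij.1 ij.2).im else (p.2 ij.1 ij.2).re) else 0
  | .inr _ => 1

/-- channel coefficient: `Φ(ρ) i' j' = ∑_{i,j} Cf i j i' j' * ρ i j` -/
noncomputable def Cf (A : QCFA α c q) (s : Fin c) (a : α) (i j i' j' : Fin q) : ℂ :=
  ∑ k, A.Kr s a k i' i * (starRingEnd ℂ) (A.Kr s a k j' j)

lemma chan_entry (A : QCFA α c q) (s : Fin c) (a : α) (ρ : Matrix (Fin q) (Fin q) ℂ)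
    (i' j' : Fin q) :
    A.chan s a ρ i' j' = ∑ i, ∑ j, Cf A s a i j i' j' * ρ i j := by
  unfold QCFA.chan Cf
  rw [Matrix.sum_apply]
  have hk : ∀ k, (A.Kr s a k * ρ * (A.Kr s a k)ᴴ) i' j'
      = ∑ i, ∑ j, A.Kr s a k i' i * (starRingEnd ℂ) (A.Kr s a k j' j) * ρ i j := by
    intro k
    simp only [Matrix.mul_apply, Matrix.conjTranspose_apply, Finset.sum_mul]
    rw [Finset.sum_comm]
    refine Finset.sum_congr rfl fun i _ => ?_
    refine Finset.sum_congr rfl fun j _ => ?_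
    simp [RCLike.star_def]
    ring
  rw [Finset.sum_congr rfl fun k _ => hk k, Finset.sum_comm]
  refine Finset.sum_congr rfl fun i _ => ?_
  rw [Finset.sum_comm]
  refine Finset.sum_congr rfl fun j _ => ?_
  rw [Finset.sum_mul]

/-- real transition matrix on the middle coordinates -/
noncomputable def Tm (A : QCFA α c q) (a : α) : Matrix (MidT c q) (MidT c q) ℝ :=
  Matrix.of fun x y =>
    match x, y with
    | .inl (t, ij, b), .inl (t', ij', b') =>
        if A.δ t a = t' then
          (if b then (if b' then (Cf A t a ij.1 ij.2 ij'.1 ij'.2).re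
                      else -(Cf A t a ij.1 ij.2 ij'.1 ij'.2).im)
           else (if b' then (Cf A t a ij.1 ij.2 ij'.1 ij'.2).im
                 else (Cf A t a ij.1 ij.2 ij'.1 ij'.2).re))
        else 0
    | .inl _, .inr _ => 0
    | .inr _, .inl _ => 0
    | .inr _, .inr _ => 1

/-- Key step lemma: one channel application is simulated by vecMul with Tm. -/
lemma enc_step (A : QCFA α c q) (a : α) (p : Fin c × Matrix (Fin q) (Fin q) ℂ) :
    Matrix.vecMul (enc p) (Tm A a) = enc (A.δ p.1 a, A.chan p.1 a p.2) := by
  funext y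
  rw [Matrix.vecMul, dotProduct]
  rw [Fintype.sum_sum_type]
  cases y with
  | inr u =>
      simp [Tm, enc]
  | inl z =>
      obtain ⟨t', ij', b'⟩ := z
      have h2 : ∑ u : Unit, enc p (Sum.inr u) * Tm A a (Sum.inr u) (Sum.inl (t', ij', b')) = 0 := by
        simp [Tm, enc]
      rw [h2, add_zero]
      rw [Fintype.sum_prod_type]
      have h3 : ∀ t : Fin c, (∑ zb : (Fin q × Fin q) × Bool,
          enc p (Sum.inl (t, zb.1, zb.2)) * Tm A a (Sum.inl (t, zb.1, zb.2)) (Sum.inl (t', ij', b')))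
          = if t = p.1 then (∑ zb : (Fin q × Fin q) × Bool,
              (if zb.2 then (p.2 zb.1.1 zb.1.2).im else (p.2 zb.1.1 zb.1.2).re) *
              Tm A a (Sum.inl (p.1, zb.1, zb.2)) (Sum.inl (t', ij', b'))) else 0 := by
        intro t
        by_cases ht : t = p.1
        · subst ht; simp [enc]
        · simp [enc, ht]
      rw [Finset.sum_congr rfl (fun t _ => h3 t), Finset.sum_ite_eq' Finset.univ p.1]
      simp only [Finset.mem_univ, if_true]
      by_cases hd : A.δ p.1 a = t'
      · subst hd
        simp only [enc, if_pos rfl]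
        rw [chan_entry]
        cases b' <;>
          simp only [Bool.false_eq_true, if_true, if_false, Complex.re_sum, Complex.im_sum,
            Fintype.sum_prod_type] <;>
        · refine Finset.sum_congr rfl fun i _ => ?_
          refine Finset.sum_congr rfl fun j _ => ?_
          rw [Fintype.sum_bool]
          simp only [Tm, Matrix.of_apply, if_pos rfl, Complex.mul_re, Complex.mul_im,
            if_true, if_false, Bool.false_eq_true]
          ring
      · have hd' : ¬ (t' = A.δ p.1 a) := fun h => hd h.symm
        simp only [enc, if_neg hd']
        simp [Tm, hd]

lemma run_concat (A : QCFA α c q) (w : List α) (a : α) :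
    A.run (w ++ [a]) = (A.δ (A.run w).1 a, A.chan (A.run w).1 a (A.run w).2) := by
  unfold QCFA.run
  rw [List.foldl_append]
  rfl

/-- evolution over a word -/
lemma enc_run (A : QCFA α c q) (w : List α) :
    Matrix.vecMul (enc (A.s0, A.ρ0)) ((w.map (Tm A)).prod) = enc (A.run w) := by
  induction w using List.reverseRecOn with
  | nil => simp [QCFA.run, Matrix.vecMul_one]
  | append_singleton w a ih =>
      rw [List.map_append, List.prod_append, List.map_singleton, List.prod_singleton,
        ← Matrix.vecMul_vecMul, ih, enc_step, run_concat]

/-- output functional -/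
noncomputable def eta (A : QCFA α c q) (lam : ℝ) : MidT c q → ℝ
  | .inl (_, ij, b) => if b then -((A.Pacc ij.2 ij.1).im) else (A.Pacc ij.2 ij.1).re
  | .inr _ => -lam

lemma enc_dot_eta (A : QCFA α c q) (lam : ℝ) (p : Fin c × Matrix (Fin q) (Fin q) ℂ) :
    dotProduct (enc p) (eta A lam) = (Matrix.trace (A.Pacc * p.2)).re - lam := by
  rw [dotProduct, Fintype.sum_sum_type]
  have h2 : ∑ u : Unit, enc p (Sum.inr u) * eta A lam (Sum.inr u) = -lam := by
    simp [enc, eta]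
  rw [h2, Fintype.sum_prod_type]
  have h3 : ∀ t : Fin c, (∑ zb : (Fin q × Fin q) × Bool,
      enc p (Sum.inl (t, zb.1, zb.2)) * eta A lam (Sum.inl (t, zb.1, zb.2)))
      = if t = p.1 then (∑ zb : (Fin q × Fin q) × Bool,
          (if zb.2 then (p.2 zb.1.1 zb.1.2).im else (p.2 zb.1.1 zb.1.2).re) *
          eta A lam (Sum.inl (p.1, zb.1, zb.2))) else 0 := by
    intro t
    by_cases ht : t = p.1
    · subst ht; simp [enc]
    · simp [enc, ht]
  rw [Finset.sum_congr rfl (fun t _ => h3 t), Finset.sum_ite_eq' Finset.univ p.1]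
  simp only [Finset.mem_univ, if_true]
  have h4 : (Matrix.trace (A.Pacc * p.2)).re
      = ∑ i : Fin q, ∑ j : Fin q,
        ((A.Pacc j i).re * (p.2 i j).re - (A.Pacc j i).im * (p.2 i j).im) := by
    rw [Matrix.trace]
    simp only [Matrix.diag_apply, Matrix.mul_apply, Complex.re_sum]
    rw [Finset.sum_comm]
    refine Finset.sum_congr rfl fun i _ => ?_
    simp [Complex.mul_re]
  rw [h4, sub_eq_add_neg, add_left_inj]
  simp only [Fintype.sum_prod_type]
  refine Finset.sum_congr rfl fun i _ => ?_
  refine Finset.sum_congr rfl fun j _ => ?_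
  rw [Fintype.sum_bool]
  simp [eta]
  ring

/-! ## Part B: Turakainen construction -/

/-- full state type: middle coordinates plus 3 extra states (0 = start, 1 = row-sum sink,
2 = column-sum fixer) -/
abbrev StT (c q : ℕ) := MidT c q ⊕ Fin 3

/-- extension of a middle vector to the full state space, with zero total sum -/
noncomputable def ext (x : MidT c q → ℝ) : StT c q → ℝ
  | .inl m => x m
  | .inr k => if k = 1 then -(∑ m, x m) else 0

lemma ext_sum (x : MidT c q → ℝ) : ∑ y, ext x y = 0 := by
  rw [Fintype.sum_sum_type, Fin.sum_univ_three]
  simp only [ext]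
  simp

lemma ext_zero : ext (fun _ => (0:ℝ)) = fun (_ : StT c q) => (0:ℝ) := by
  funext y
  cases y with
  | inl m => rfl
  | inr k => simp [ext]

/-- the rows of the generalized transition matrix, as middle vectors -/
noncomputable def brow (A : QCFA α c q) (a : α) : StT c q → MidT c q → ℝ
  | .inl i => Tm A a i
  | .inr k =>
      if k = 0 then Matrix.vecMul (enc (A.s0, A.ρ0)) (Tm A a)
      else if k = 2 then
        (fun j => -(Matrix.vecMul (enc (A.s0, A.ρ0)) (Tm A a) j) - ∑ i, Tm A a i j)
      else (fun _ => 0)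

/-- the generalized (zero row and column sums) transition matrix -/
noncomputable def Bm (A : QCFA α c q) (a : α) : Matrix (StT c q) (StT c q) ℝ :=
  Matrix.of fun r => ext (brow A a r)

lemma brow_colsum (A : QCFA α c q) (a : α) (j : MidT c q) :
    ∑ r, brow A a r j = 0 := by
  rw [Fintype.sum_sum_type, Fin.sum_univ_three]
  simp only [brow]
  simp
  ring

lemma Bm_rowsum (A : QCFA α c q) (a : α) (r : StT c q) : ∑ y, Bm A a r y = 0 :=
  ext_sum _

lemma Bm_colsum (A : QCFA α c q) (a : α) (y : StT c q) : ∑ r, Bm A a r y = 0 := by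
  cases y with
  | inl j =>
      have : ∀ r, Bm A a r (Sum.inl j) = brow A a r j := fun r => rfl
      rw [Finset.sum_congr rfl fun r _ => this r]
      exact brow_colsum A a j
  | inr k =>
      by_cases hk : k = 1
      · subst hk
        have : ∀ r, Bm A a r (Sum.inr 1) = -(∑ j, brow A a r j) := fun r => rfl
        rw [Finset.sum_congr rfl fun r _ => this r]
        rw [Finset.sum_neg_distrib, neg_eq_zero, Finset.sum_comm]
        rw [← Finset.sum_const_zero (s := (Finset.univ : Finset (MidT c q)))]
        exact Finset.sum_congr rfl fun j _ => brow_colsum A a j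
      · have : ∀ r, Bm A a r (Sum.inr k) = 0 := by
          intro r
          show ext (brow A a r) (Sum.inr k) = 0
          simp [ext, hk]
        rw [Finset.sum_congr rfl fun r _ => this r, Finset.sum_const_zero]

/-- evolution of extended vectors under the generalized matrix -/
lemma vecMul_ext_Bm (A : QCFA α c q) (a : α) (x : MidT c q → ℝ) :
    Matrix.vecMul (ext x) (Bm A a) = ext (Matrix.vecMul x (Tm A a)) := by
  funext y
  rw [Matrix.vecMul, dotProduct, Fintype.sum_sum_type, Fin.sum_univ_three]
  have e0 : ext x (Sum.inr 0) = 0 := by simp [ext]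
  have e2 : ext x (Sum.inr 2) = 0 := by simp [ext]
  have b1 : Bm A a (Sum.inr 1) y = 0 := by
    show ext (brow A a (Sum.inr 1)) y = 0
    have : brow A a (Sum.inr 1) = (fun _ => (0:ℝ)) := by simp [brow]
    rw [this, ext_zero]
  rw [e0, e2, b1, zero_mul, zero_mul, mul_zero, add_zero, add_zero, add_zero]
  have hmid : ∀ i, ext x (Sum.inl i) * Bm A a (Sum.inl i) y = x i * ext (Tm A a i) y :=
    fun i => rfl
  rw [Finset.sum_congr rfl fun i _ => hmid i]
  cases y with
  | inl j =>
      show _ = Matrix.vecMul x (Tm A a) j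
      rw [Matrix.vecMul, dotProduct]
      exact Finset.sum_congr rfl fun i _ => rfl
  | inr k =>
      by_cases hk : k = 1
      · subst hk
        show _ = -(∑ j, Matrix.vecMul x (Tm A a) j)
        have : ∀ i, x i * ext (Tm A a i) (Sum.inr 1) = -(∑ j, x i * Tm A a i j) := by
          intro i
          show x i * (if (1:Fin 3) = 1 then -(∑ j, Tm A a i j) else 0) = _
          rw [if_pos rfl, mul_neg, Finset.mul_sum]
        rw [Finset.sum_congr rfl fun i _ => this i, Finset.sum_neg_distrib]
        congr 1
        rw [Finset.sum_comm]
        refine Finset.sum_congr rfl fun j _ => ?_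
        rw [Matrix.vecMul, dotProduct]
      · have h1 : ∀ i, x i * ext (Tm A a i) (Sum.inr k) = 0 := by
          intro i
          show x i * (if k = 1 then -(∑ j, Tm A a i j) else 0) = 0
          rw [if_neg hk, mul_zero]
        have h2 : ext (Matrix.vecMul x (Tm A a)) (Sum.inr k) = 0 := by simp [ext, hk]
        rw [Finset.sum_congr rfl fun i _ => h1 i, Finset.sum_const_zero, h2]

/-- number of states -/
noncomputable def mR (c q : ℕ) : ℝ := (Fintype.card (StT c q) : ℝ)

lemma card_StT (c q : ℕ) : Fintype.card (StT c q) = 2*c*q^2+4 := by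
  simp [StT, MidT]
  ring

lemma mR_eq (c q : ℕ) : mR c q = 2*(c:ℝ)*(q:ℝ)^2+4 := by
  rw [mR, card_StT]
  push_cast
  ring

lemma mR_pos (c q : ℕ) : 0 < mR c q := by
  rw [mR_eq]
  positivity

/-- the stochastic transition matrices -/
noncomputable def Cm (A : QCFA α c q) (g : ℝ) (a : α) : Matrix (StT c q) (StT c q) ℝ :=
  Matrix.of fun r y => 1/(mR c q) + Bm A a r y/(mR c q * g)

/-- core evolution lemma for the stochastic matrices -/
lemma vecMul_affine_Cm (A : QCFA α c q) (g : ℝ) (a : α) (x : MidT c q → ℝ) (t : ℝ) :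
    Matrix.vecMul (fun y => 1/(mR c q) + t * ext x y) (Cm A g a)
      = fun y => 1/(mR c q) + (t * (1/(mR c q * g))) * ext (Matrix.vecMul x (Tm A a)) y := by
  have hm := mR_pos c q
  funext y
  rw [Matrix.vecMul, dotProduct]
  have expand : ∀ r, (1/(mR c q) + t * ext x r) * (Cm A g a r y)
      = (1/(mR c q) * (1/(mR c q)) + (t/(mR c q)) * ext x r)
        + ((Bm A a r y) * (1/((mR c q) * ((mR c q) * g)))
          + (t/((mR c q) * g)) * (ext x r * Bm A a r y)) := by
    intro r
    show (1/(mR c q) + t * ext x r) * (1/(mR c q) + Bm A a r y/(mR c q * g)) = _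
    ring
  rw [Finset.sum_congr rfl fun r _ => expand r]
  have hsum : ∑ r, ext x r * Bm A a r y = ext (Matrix.vecMul x (Tm A a)) y := by
    rw [← vecMul_ext_Bm A a x, Matrix.vecMul, dotProduct]
  have hcard : ((Fintype.card (StT c q)) : ℝ) = mR c q := rfl
  simp only [Finset.sum_add_distrib, ← Finset.mul_sum, ← Finset.sum_mul, Finset.sum_const,
    Finset.card_univ, nsmul_eq_mul, hcard, Bm_colsum, ext_sum, hsum, mul_zero, zero_mul,
    add_zero, zero_add]
  field_simp

/-- initial distribution: concentrated on the start state -/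
noncomputable def inits : StT c q → ℝ := fun y => if y = Sum.inr 0 then 1 else 0

lemma vecMul_inits {M : Matrix (StT c q) (StT c q) ℝ} :
    Matrix.vecMul (inits) M = M (Sum.inr 0) := by
  funext y
  rw [Matrix.vecMul, dotProduct]
  rw [Finset.sum_eq_single (Sum.inr 0)]
  · simp [inits]
  · intro r _ hr; simp [inits, hr]
  · intro h; exact absurd (Finset.mem_univ _) h

lemma Bm_row_s (A : QCFA α c q) (a : α) :
    Bm A a (Sum.inr 0) = ext (Matrix.vecMul (enc (A.s0, A.ρ0)) (Tm A a)) := by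
  show ext (brow A a (Sum.inr 0)) = _
  congr 1

/-- main evolution: applying the stochastic matrices along a nonempty word -/
lemma vecMul_inits_word (A : QCFA α c q) (g : ℝ) (w : List α) (hw : w ≠ []) :
    Matrix.vecMul (inits) ((w.map (Cm A g)).prod)
      = fun y => 1/(mR c q) + (1/(mR c q * g))^(w.length) * ext (enc (A.run w)) y := by
  induction w using List.reverseRecOn with
  | nil => exact absurd rfl hw
  | append_singleton w a ih =>
      rcases eq_or_ne w [] with h | h
      · subst h
        simp only [List.nil_append, List.map_singleton, List.prod_singleton, List.length_singleton,
          pow_one]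
        rw [vecMul_inits]
        funext y
        show 1/(mR c q) + Bm A a (Sum.inr 0) y/(mR c q * g) = _
        rw [Bm_row_s]
        have : Matrix.vecMul (enc (A.s0, A.ρ0)) (Tm A a) = enc (A.run [a]) := by
          have := enc_run A [a]
          simpa using this
        rw [this]
        ring
      · rw [List.map_append, List.prod_append, List.map_singleton, List.prod_singleton,
          ← Matrix.vecMul_vecMul, ih h, vecMul_affine_Cm]
        funext y
        have hrc : A.run (w ++ [a]) = (A.δ (A.run w).1 a, A.chan (A.run w).1 a (A.run w).2) :=
          run_concat A w a
        have hstep : Matrix.vecMul (enc (A.run w)) (Tm A a) = enc (A.run (w ++ [a])) := by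
          rw [enc_step, hrc]
        rw [hstep, List.length_append, List.length_singleton, pow_succ]

/-- accepting set indicator: exactly half the states -/
noncomputable def Fv : StT c q → ℝ
  | .inl (.inl (_, _, b)) => if b then 1 else 0
  | .inl (.inr _) => 1
  | .inr k => if k = 0 then 1 else 0

lemma Fv01 (y : StT c q) : Fv y = 0 ∨ Fv y = 1 := by
  rcases y with (⟨t, ij, b⟩ | u) | k
  · cases b
    · left; rfl
    · right; rfl
  · right; rfl
  · by_cases hk : k = 0
    · right; simp [Fv, hk]
    · left; simp [Fv, hk]

lemma sum_Fv (c q : ℕ) : ∑ y, Fv (c := c) (q := q) y = (c:ℝ)*(q:ℝ)^2 + 2 := by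
  rw [Fintype.sum_sum_type, Fin.sum_univ_three, Fintype.sum_sum_type]
  have h1 : ∑ z : Fin c × (Fin q × Fin q) × Bool, Fv (c := c) (q := q) (Sum.inl (Sum.inl z))
      = (c:ℝ)*(q:ℝ)^2 := by
    rw [Fintype.sum_prod_type]
    have ht : ∀ t : Fin c, (∑ zb : (Fin q × Fin q) × Bool,
        Fv (c := c) (q := q) (Sum.inl (Sum.inl (t, zb.1, zb.2)))) = (q:ℝ)^2 := by
      intro t
      rw [Fintype.sum_prod_type]
      have hij : ∀ ij : Fin q × Fin q,
          (∑ b : Bool, Fv (c := c) (q := q) (Sum.inl (Sum.inl (t, ij, b)))) = 1 := by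
        intro ij
        rw [Fintype.sum_bool]
        show (1:ℝ) + 0 = 1
        ring
      rw [Finset.sum_congr rfl fun ij _ => hij ij, Finset.sum_const, Finset.card_univ]
      simp [sq]
    rw [Finset.sum_congr rfl fun t _ => ht t, Finset.sum_const, Finset.card_univ]
    simp [mul_comm]
  rw [h1]
  have h2 : ∑ u : Unit, Fv (c := c) (q := q) (Sum.inl (Sum.inr u)) = 1 := by
    simp [Fv]
  rw [h2]
  have h3 : Fv (c := c) (q := q) (Sum.inr 0) = 1 := by simp [Fv]
  have h4 : Fv (c := c) (q := q) (Sum.inr 1) = 0 := by simp [Fv]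
  have h5 : Fv (c := c) (q := q) (Sum.inr 2) = 0 := by simp [Fv]
  rw [h3, h4, h5]
  ring

lemma two_sum_Fv (c q : ℕ) : 2 * (∑ y, Fv (c := c) (q := q) y) = mR c q := by
  rw [sum_Fv, mR_eq]; ring

/-- the ± vector used in the rank-one end-marker matrix -/
noncomputable def ww : StT c q → ℝ := fun y => 2 * Fv y - 1

lemma ww_mul_Fv (y : StT c q) : ww y * Fv y = Fv y := by
  rcases Fv01 y with h | h
  · simp [ww, h]
  · simp only [ww, h]
    norm_num

lemma sum_ww (c q : ℕ) : ∑ y, ww (c := c) (q := q) y = 0 := by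
  unfold ww
  rw [Finset.sum_sub_distrib, ← Finset.mul_sum, Finset.sum_const, Finset.card_univ]
  have hcard : ((Fintype.card (StT c q)) : ℝ) = mR c q := rfl
  rw [nsmul_eq_mul, mul_one, hcard, two_sum_Fv, sub_self]

lemma sum_ww_Fv (c q : ℕ) : ∑ y, ww (c := c) (q := q) y * Fv y = ∑ y, Fv (c := c) (q := q) y :=
  Finset.sum_congr rfl fun y _ => ww_mul_Fv y

/-- the left vector of the rank-one end-marker matrix -/
noncomputable def vv (A : QCFA α c q) (lam : ℝ) : StT c q → ℝ
  | .inl m => (2 / mR c q) * eta A lam m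
  | .inr k =>
      if k = 0 then (2 / mR c q) * (dotProduct (enc (A.s0, A.ρ0)) (eta A lam))
      else if k = 2 then
        -((2 / mR c q) * (dotProduct (enc (A.s0, A.ρ0)) (eta A lam))
          + ∑ m, (2 / mR c q) * eta A lam m)
      else 0

lemma sum_vv (A : QCFA α c q) (lam : ℝ) : ∑ r, vv A lam r = 0 := by
  rw [Fintype.sum_sum_type, Fin.sum_univ_three]
  simp only [vv]
  simp

lemma sum_ext_vv (A : QCFA α c q) (lam : ℝ) (x : MidT c q → ℝ) :
    ∑ r, ext x r * vv A lam r = (2 / mR c q) * dotProduct x (eta A lam) := by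
  rw [Fintype.sum_sum_type, Fin.sum_univ_three]
  have e0 : ext x (Sum.inr 0) = 0 := by simp [ext]
  have e2 : ext x (Sum.inr 2) = 0 := by simp [ext]
  have v1 : vv A lam (Sum.inr 1) = 0 := by simp [vv]
  rw [e0, e2, v1, zero_mul, zero_mul, mul_zero, add_zero, add_zero, add_zero]
  rw [dotProduct, Finset.mul_sum]
  refine Finset.sum_congr rfl fun m _ => ?_
  show x m * ((2 / mR c q) * eta A lam m) = _
  ring

/-- the stochastic end-marker matrix -/
noncomputable def Cend (A : QCFA α c q) (lam g' : ℝ) : Matrix (StT c q) (StT c q) ℝ :=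
  Matrix.of fun r y => 1/(mR c q) + vv A lam r * ww y/(mR c q * g')

/-- applying the end matrix to an affine-extended vector and reading out -/
lemma dot_affine_Cend_Fv (A : QCFA α c q) (lam g' : ℝ) (hg' : g' ≠ 0) (x : MidT c q → ℝ) (t : ℝ) :
    dotProduct (Matrix.vecMul (fun y => 1/(mR c q) + t * ext x y) (Cend A lam g')) Fv
      = 1/2 + t * dotProduct x (eta A lam) / (mR c q * g') := by
  have hm := mR_pos c q
  have hcard : ((Fintype.card (StT c q)) : ℝ) = mR c q := rfl
  have hvm : Matrix.vecMul (fun y => 1/(mR c q) + t * ext x y) (Cend A lam g')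
      = fun y => 1/(mR c q)
        + (t * ((2 / mR c q) * dotProduct x (eta A lam)) / (mR c q * g')) * ww y := by
    funext y
    rw [Matrix.vecMul, dotProduct]
    have expand : ∀ r, (1/(mR c q) + t * ext x r) * (Cend A lam g' r y)
        = (1/(mR c q) * (1/(mR c q)) + (t/(mR c q)) * ext x r)
          + ((vv A lam r) * (ww y/((mR c q) * ((mR c q) * g')))
            + ((t * ww y)/((mR c q) * g')) * (ext x r * vv A lam r)) := by
      intro r
      show (1/(mR c q) + t * ext x r) * (1/(mR c q) + vv A lam r * ww y/(mR c q * g')) = _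
      ring
    rw [Finset.sum_congr rfl fun r _ => expand r]
    simp only [Finset.sum_add_distrib, ← Finset.mul_sum, ← Finset.sum_mul, Finset.sum_const,
      Finset.card_univ, nsmul_eq_mul, hcard, sum_vv, ext_sum, sum_ext_vv, mul_zero, zero_mul,
      add_zero, zero_add]
    field_simp
  rw [hvm, dotProduct]
  have expand2 : ∀ y : StT c q, (1/(mR c q)
        + (t * ((2 / mR c q) * dotProduct x (eta A lam)) / (mR c q * g')) * ww y) * Fv y
      = (1/(mR c q)) * Fv y
        + (t * ((2 / mR c q) * dotProduct x (eta A lam)) / (mR c q * g')) * (ww y * Fv y) := by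
    intro y; ring
  rw [Finset.sum_congr rfl fun y _ => expand2 y]
  rw [Finset.sum_add_distrib, ← Finset.mul_sum, ← Finset.mul_sum, sum_ww_Fv, sum_Fv]
  have h2 : (1/(mR c q)) * ((c:ℝ)*(q:ℝ)^2 + 2) = 1/2 := by
    rw [mR_eq]
    rw [div_mul_eq_mul_div, mul_comm, ← div_mul_eq_mul_div]
    rw [show (2*(c:ℝ)*(q:ℝ)^2+4 : ℝ) = 2 * ((c:ℝ)*(q:ℝ)^2 + 2) by ring]
    rw [div_mul_eq_div_div_swap]
    have hpos : (0:ℝ) < (c:ℝ)*(q:ℝ)^2 + 2 := by positivity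
    rw [div_self hpos.ne']
    norm_num
  rw [h2]
  have hmn : mR c q ≠ 0 := (mR_pos c q).ne'
  congr 1
  rw [mR_eq] at *
  field_simp
  ring

lemma half_eq (c q : ℕ) : (1/(mR c q)) * ((c:ℝ)*(q:ℝ)^2 + 2) = 1/2 := by
  rw [mR_eq]
  have hpos : (0:ℝ) < (c:ℝ)*(q:ℝ)^2 + 2 := by positivity
  field_simp
  ring

/-- the overall acceptance value of the constructed automaton -/
lemma value_formula (A : QCFA α c q) (lam g g' : ℝ) (hg' : g' ≠ 0) (w : List α) :
    dotProduct (Matrix.vecMul inits ((w.map (Cm A g)).prod * Cend A lam g')) Fv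
      = 1/2 + (1/(mR c q * g))^(w.length) * (A.accProb w - lam) / (mR c q * g') := by
  have hm := mR_pos c q
  have hmn : mR c q ≠ 0 := hm.ne'
  rcases eq_or_ne w [] with h | h
  · subst h
    simp only [List.map_nil, List.prod_nil, one_mul, List.length_nil, pow_zero]
    rw [vecMul_inits]
    have hrow : Cend A lam g' (Sum.inr 0) = fun y => 1/(mR c q)
        + (((2 / mR c q) * (dotProduct (enc (A.s0, A.ρ0)) (eta A lam)))/(mR c q * g'))
          * ww y := by
      funext y
      show 1/(mR c q) + vv A lam (Sum.inr 0) * ww y/(mR c q * g') = _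
      have : vv A lam (Sum.inr 0)
          = (2 / mR c q) * (dotProduct (enc (A.s0, A.ρ0)) (eta A lam)) := by
        simp [vv]
      rw [this]
      ring
    rw [hrow, dotProduct]
    have expand : ∀ y : StT c q, (1/(mR c q)
          + (((2 / mR c q) * (dotProduct (enc (A.s0, A.ρ0)) (eta A lam)))/(mR c q * g'))
            * ww y) * Fv y
        = (1/(mR c q)) * Fv y
          + (((2 / mR c q) * (dotProduct (enc (A.s0, A.ρ0)) (eta A lam)))/(mR c q * g'))
            * (ww y * Fv y) := by
      intro y; ring
    rw [Finset.sum_congr rfl fun y _ => expand y, Finset.sum_add_distrib, ← Finset.mul_sum,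
      ← Finset.mul_sum, sum_ww_Fv, sum_Fv, half_eq]
    have hdot : dotProduct (enc (A.s0, A.ρ0)) (eta A lam) = A.accProb [] - lam := by
      have := enc_dot_eta A lam (A.s0, A.ρ0)
      rw [this]
      rfl
    rw [hdot]
    congr 1
    rw [mR_eq] at *
    field_simp
    ring
  · rw [← Matrix.vecMul_vecMul, vecMul_inits_word A g w h,
      dot_affine_Cend_Fv A lam g' hg' (enc (A.run w)) ((1/(mR c q * g))^(w.length))]
    have hdot : dotProduct (enc (A.run w)) (eta A lam) = A.accProb w - lam :=
      enc_dot_eta A lam (A.run w)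
    rw [hdot]

/-! ## stochasticity -/

lemma sum_one_div_mR (c q : ℕ) : ∑ _y : StT c q, 1/(mR c q) = 1 := by
  rw [Finset.sum_const, Finset.card_univ, nsmul_eq_mul]
  have hcard : ((Fintype.card (StT c q)) : ℝ) = mR c q := rfl
  rw [hcard, mul_one_div, div_self (mR_pos c q).ne']

lemma Cm_nonneg (A : QCFA α c q) (g : ℝ) (a : α) (hg1 : 1 ≤ g)
    (hB : ∀ r y, |Bm A a r y| ≤ g) (r y : StT c q) : 0 ≤ Cm A g a r y := by
  show 0 ≤ 1/(mR c q) + Bm A a r y/(mR c q * g)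
  have hm := mR_pos c q
  have hg0 : (0:ℝ) < g := lt_of_lt_of_le one_pos hg1
  have h1 : -g ≤ Bm A a r y := (abs_le.mp (hB r y)).1
  have h2 : (-g)/(mR c q * g) ≤ Bm A a r y/(mR c q * g) :=
    (div_le_div_iff_of_pos_right (by positivity)).mpr h1
  have h3 : (-g)/(mR c q * g) = -(1/(mR c q)) := by
    field_simp
  linarith

lemma Cm_rowsum (A : QCFA α c q) (g : ℝ) (a : α) (r : StT c q) :
    ∑ y, Cm A g a r y = 1 := by
  have h1 : ∀ y : StT c q, Cm A g a r y = 1/(mR c q) + Bm A a r y/(mR c q * g) := fun y => rfl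
  have h2 : ∑ y : StT c q, Bm A a r y/(mR c q * g) = 0 := by
    rw [← Finset.sum_div, Bm_rowsum, zero_div]
  rw [Finset.sum_congr rfl fun y _ => h1 y, Finset.sum_add_distrib, h2, add_zero, sum_one_div_mR]

lemma Cend_nonneg (A : QCFA α c q) (lam g' : ℝ) (hg1 : 1 ≤ g')
    (hB : ∀ r y : StT c q, |vv A lam r * ww y| ≤ g') (r y : StT c q) : 0 ≤ Cend A lam g' r y := by
  show 0 ≤ 1/(mR c q) + vv A lam r * ww y/(mR c q * g')
  have hm := mR_pos c q
  have hg0 : (0:ℝ) < g' := lt_of_lt_of_le one_pos hg1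
  have h1 : -g' ≤ vv A lam r * ww y := (abs_le.mp (hB r y)).1
  have h2 : (-g')/(mR c q * g') ≤ (vv A lam r * ww y)/(mR c q * g') :=
    (div_le_div_iff_of_pos_right (by positivity)).mpr h1
  have h3 : (-g')/(mR c q * g') = -(1/(mR c q)) := by
    field_simp
  have h4 : vv A lam r * ww y/(mR c q * g') = (vv A lam r * ww y)/(mR c q * g') := by
    ring
  rw [h4]
  linarith

lemma Cend_rowsum (A : QCFA α c q) (lam g' : ℝ) (r : StT c q) :
    ∑ y, Cend A lam g' r y = 1 := by
  have h1 : ∀ y : StT c q, Cend A lam g' r y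
      = 1/(mR c q) + (vv A lam r /(mR c q * g')) * ww y := fun y => by
    show 1/(mR c q) + vv A lam r * ww y/(mR c q * g') = _
    ring
  have h2 : ∑ y : StT c q, (vv A lam r /(mR c q * g')) * ww y = 0 := by
    rw [← Finset.mul_sum, sum_ww, mul_zero]
  rw [Finset.sum_congr rfl fun y _ => h1 y, Finset.sum_add_distrib, h2, add_zero, sum_one_div_mR]

/-! ## transport to `Fin m` -/

lemma vecMul_submatrix {m : ℕ} (e : Fin m ≃ StT c q) (v : StT c q → ℝ)
    (M : Matrix (StT c q) (StT c q) ℝ) :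
    Matrix.vecMul (fun i => v (e i)) (M.submatrix e e) = fun j => Matrix.vecMul v M (e j) := by
  funext j
  rw [Matrix.vecMul, dotProduct, Matrix.vecMul, dotProduct]
  exact Fintype.sum_equiv e _ _ fun i => rfl

lemma dot_submatrix {m : ℕ} (e : Fin m ≃ StT c q) (u f : StT c q → ℝ) :
    dotProduct (fun i => u (e i)) (fun i => f (e i)) = dotProduct u f := by
  rw [dotProduct, dotProduct]
  exact Fintype.sum_equiv e _ _ fun i => rfl

lemma rowsum_submatrix {m : ℕ} (e : Fin m ≃ StT c q) (M : Matrix (StT c q) (StT c q) ℝ)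
    (i : Fin m) : ∑ j, M.submatrix e e i j = ∑ y, M (e i) y :=
  Fintype.sum_equiv e _ _ fun j => rfl

end QCFASim

open QCFASim

/-- Theorem hybrid-main (a): every (c,q)-1QCFA with strict cutpoint `λ` is
simulated, with strict cutpoint `1/2`, by a one-way PFA with at most `2cq²+6` states over
the same alphabet. -/
theorem qcfa_simulation_upper (c q : ℕ) (hc : 2 ≤ c) (hq : 2 ≤ q)
    (α : Type) [Fintype α] (A : QCFA α c q) (lam : ℝ) :
    ∃ (m : ℕ) (P : PFA α m), m ≤ 2 * c * q ^ 2 + 6 ∧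
      ∀ w : List α, P.accProb w > 1 / 2 ↔ A.accProb w > lam := by
  classical
  set n := Fintype.card (StT c q) with hn
  have hcard : n = 2*c*q^2+4 := card_StT c q
  -- the scaling constants
  set gv : ℝ := 1 + ∑ a : α, ∑ r : StT c q, ∑ y : StT c q, |Bm A a r y| with hgv
  set gv' : ℝ := 1 + ∑ r : StT c q, ∑ y : StT c q, |vv A lam r * ww y| with hgv'
  have hgv1 : 1 ≤ gv := by
    rw [hgv]
    have : (0:ℝ) ≤ ∑ a : α, ∑ r : StT c q, ∑ y : StT c q, |Bm A a r y| :=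
      Finset.sum_nonneg fun _ _ => Finset.sum_nonneg fun _ _ =>
        Finset.sum_nonneg fun _ _ => abs_nonneg _
    linarith
  have hgv'1 : 1 ≤ gv' := by
    rw [hgv']
    have : (0:ℝ) ≤ ∑ r : StT c q, ∑ y : StT c q, |vv A lam r * ww y| :=
      Finset.sum_nonneg fun _ _ => Finset.sum_nonneg fun _ _ => abs_nonneg _
    linarith
  have hBle : ∀ (a : α) (r y : StT c q), |Bm A a r y| ≤ gv := by
    intro a r y
    have h1 : |Bm A a r y| ≤ ∑ y' : StT c q, |Bm A a r y'| :=
      Finset.single_le_sum (f := fun y' => |Bm A a r y'|) (fun _ _ => abs_nonneg _)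
        (Finset.mem_univ y)
    have h2 : ∑ y' : StT c q, |Bm A a r y'|
        ≤ ∑ r' : StT c q, ∑ y' : StT c q, |Bm A a r' y'| :=
      Finset.single_le_sum (f := fun r' => ∑ y' : StT c q, |Bm A a r' y'|)
        (fun _ _ => Finset.sum_nonneg fun _ _ => abs_nonneg _) (Finset.mem_univ r)
    have h3 : ∑ r' : StT c q, ∑ y' : StT c q, |Bm A a r' y'|
        ≤ ∑ a' : α, ∑ r' : StT c q, ∑ y' : StT c q, |Bm A a' r' y'| :=
      Finset.single_le_sum (f := fun a' => ∑ r' : StT c q, ∑ y' : StT c q, |Bm A a' r' y'|)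
        (fun _ _ => Finset.sum_nonneg fun _ _ => Finset.sum_nonneg fun _ _ => abs_nonneg _)
        (Finset.mem_univ a)
    rw [hgv]; linarith
  have hVle : ∀ (r y : StT c q), |vv A lam r * ww y| ≤ gv' := by
    intro r y
    have h1 : |vv A lam r * ww y| ≤ ∑ y' : StT c q, |vv A lam r * ww y'| :=
      Finset.single_le_sum (f := fun y' => |vv A lam r * ww y'|) (fun _ _ => abs_nonneg _)
        (Finset.mem_univ y)
    have h2 : ∑ y' : StT c q, |vv A lam r * ww y'|
        ≤ ∑ r' : StT c q, ∑ y' : StT c q, |vv A lam r' * ww y'| :=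
      Finset.single_le_sum (f := fun r' => ∑ y' : StT c q, |vv A lam r' * ww y'|)
        (fun _ _ => Finset.sum_nonneg fun _ _ => abs_nonneg _) (Finset.mem_univ r)
    rw [hgv']; linarith
  -- the equivalence of state spaces
  obtain ⟨e⟩ : Nonempty (Fin n ≃ StT c q) := ⟨(Fintype.equivFin (StT c q)).symm⟩
  have init_nonneg : ∀ i : Fin n, 0 ≤ inits (e i) := by
    intro i
    by_cases h : e i = Sum.inr 0 <;> simp [inits, h]
  have init_sum : ∑ i : Fin n, inits (e i) = 1 := by
    rw [Fintype.sum_equiv e (fun i => inits (e i)) inits fun i => rfl]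
    unfold inits
    rw [Finset.sum_ite_eq' Finset.univ (Sum.inr 0 : StT c q) (fun _ => (1:ℝ))]
    simp
  have trans_stoch : ∀ a : α, RowStochastic ((Cm A gv a).submatrix e e) := by
    intro a
    constructor
    · intro i j
      exact Cm_nonneg A gv a hgv1 (hBle a) (e i) (e j)
    · intro i
      rw [rowsum_submatrix e]
      exact Cm_rowsum A gv a (e i)
  have endm_stoch : RowStochastic ((Cend A lam gv').submatrix e e) := by
    constructor
    · intro i j
      exact Cend_nonneg A lam gv' hgv'1 hVle (e i) (e j)
    · intro i
      rw [rowsum_submatrix e]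
      exact Cend_rowsum A lam gv' (e i)
  have acc01 : ∀ i : Fin n, Fv (e i) = 0 ∨ Fv (e i) = 1 := fun i => Fv01 (e i)
  refine ⟨n, ⟨fun i => inits (e i), fun a => (Cm A gv a).submatrix e e,
    (Cend A lam gv').submatrix e e, fun i => Fv (e i),
    init_nonneg, init_sum, trans_stoch, endm_stoch, acc01⟩, by omega, ?_⟩
  intro w
  have hprod : (w.map (fun a => (Cm A gv a).submatrix e e)).prod
      = ((w.map (Cm A gv)).prod).submatrix e e := by
    induction w with
    | nil => simp [Matrix.submatrix_one_equiv]
    | cons a w ih =>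
        rw [List.map_cons, List.prod_cons, List.map_cons, List.prod_cons, ih,
          Matrix.submatrix_mul_equiv]
  have hval : PFA.accProb ⟨fun i => inits (e i), fun a => (Cm A gv a).submatrix e e,
      (Cend A lam gv').submatrix e e, fun i => Fv (e i),
      init_nonneg, init_sum, trans_stoch, endm_stoch, acc01⟩ w
      = 1/2 + (1/(mR c q * gv))^(w.length) * (A.accProb w - lam) / (mR c q * gv') := by
    show dotProduct (Matrix.vecMul (fun i => inits (e i))
        ((w.map (fun a => (Cm A gv a).submatrix e e)).prod * (Cend A lam gv').submatrix e e))
        (fun i => Fv (e i)) = _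
    rw [hprod, Matrix.submatrix_mul_equiv, vecMul_submatrix e inits _, dot_submatrix e _ Fv]
    exact value_formula A lam gv gv' (lt_of_lt_of_le one_pos hgv'1).ne' w
  rw [hval]
  have hm := mR_pos c q
  have hgv0 : (0:ℝ) < gv := lt_of_lt_of_le one_pos hgv1
  have hgv'0 : (0:ℝ) < gv' := lt_of_lt_of_le one_pos hgv'1
  have hpow : (0:ℝ) < (1/(mR c q * gv))^(w.length) :=
    pow_pos (div_pos one_pos (mul_pos hm hgv0)) _
  have hden : (0:ℝ) < mR c q * gv' := mul_pos hm hgv'0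
  constructor
  · intro h
    by_contra h'
    push_neg at h'
    have : A.accProb w - lam ≤ 0 := by linarith
    have hle : (1/(mR c q * gv))^(w.length) * (A.accProb w - lam) / (mR c q * gv') ≤ 0 := by
      apply div_nonpos_of_nonpos_of_nonneg
      · exact mul_nonpos_of_nonneg_of_nonpos hpow.le this
      · exact hden.le
    simp only [gt_iff_lt] at h
    linarith
  · intro h
    have hx : 0 < A.accProb w - lam := by linarith
    have hpos : 0 < (1/(mR c q * gv))^(w.length) * (A.accProb w - lam) / (mR c q * gv') :=
      div_pos (mul_pos hpow hx) hden
    simp only [gt_iff_lt]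
    linarith
end

section
/- Let n ≥ 2, let Q be an n-dimensional MO-1QFA over a finite alphabet Σ, and let λ ∈ ℝ be a strict cutpoint. Then there exists a one-way probabilistic finite automaton over the same alphabet Σ with at most 2n²+6 states that recognizes the language {w ∈ Σ* : f_Q(w) > λ} with strict cutpoint 1/2. -/
open scoped Matrix

/-- An `n`-dimensional measure-once one-way quantum finite automaton (MO-1QFA):
a unit initial vector, a unitary for each symbol, and an accepting orthogonal projector. -/
structure MOQFA (alph : Type) (n : ℕ) where
  ψ0 : Fin n → ℂ
  unit : dotProduct (star ψ0) ψ0 = 1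
  U : alph → Matrix (Fin n) (Fin n) ℂ
  unitary : ∀ a, (U a)ᴴ * U a = 1 ∧ U a * (U a)ᴴ = 1
  Pacc : Matrix (Fin n) (Fin n) ℂ
  Pacc_proj : Pacc * Pacc = Pacc
  Pacc_herm : Paccᴴ = Pacc

/-- The state `ψ_w = U_{σ_k} ⋯ U_{σ₁} ψ₀` after reading a word. -/
noncomputable def MOQFA.state {alph : Type} {n : ℕ} (Q : MOQFA alph n) (w : List alph) :
    Fin n → ℂ :=
  w.foldl (fun ψ a => (Q.U a).mulVec ψ) Q.ψ0

/-- Acceptance probability of an MO-1QFA: `⟨ψ_w, P_acc ψ_w⟩`. -/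
noncomputable def MOQFA.accProb {alph : Type} {n : ℕ} (Q : MOQFA alph n) (w : List alph) : ℝ :=
  (dotProduct (star (Q.state w)) (Q.Pacc.mulVec (Q.state w))).re

namespace Tura

/-- The extended matrix with zero row sums and zero column sums. -/
def B {M : ℕ} (A : Matrix (Fin M) (Fin M) ℝ) :
    Matrix (Fin M ⊕ Fin 2) (Fin M ⊕ Fin 2) ℝ :=
  Matrix.of fun k j => match k, j with
  | Sum.inl i, Sum.inl j => A i j
  | Sum.inl i, Sum.inr c => if c = 1 then -(∑ j', A i j') else 0
  | Sum.inr c, Sum.inl j => if c = 0 then -(∑ i', A i' j) else 0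
  | Sum.inr c, Sum.inr d => if c = 0 ∧ d = 1 then ∑ i', ∑ j', A i' j' else 0

lemma B_col0 {M : ℕ} (A : Matrix (Fin M) (Fin M) ℝ) (k : Fin M ⊕ Fin 2) :
    B A k (Sum.inr 0) = 0 := by
  cases k with
  | inl i => simp [B]
  | inr c => simp [B]

lemma B_row1 {M : ℕ} (A : Matrix (Fin M) (Fin M) ℝ) (j : Fin M ⊕ Fin 2) :
    B A (Sum.inr 1) j = 0 := by
  cases j with
  | inl i => simp [B]
  | inr c => simp [B]

lemma B_row {M : ℕ} (A : Matrix (Fin M) (Fin M) ℝ) (k : Fin M ⊕ Fin 2) :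
    ∑ j, B A k j = 0 := by
  cases k with
  | inl i =>
      simp [B, Fintype.sum_sum_type, Fin.sum_univ_two]
  | inr c =>
      fin_cases c
      · simp [B, Fintype.sum_sum_type, Fin.sum_univ_two]
        rw [Finset.sum_comm]
        simp
      · simp [B, Fintype.sum_sum_type, Fin.sum_univ_two]

lemma B_col {M : ℕ} (A : Matrix (Fin M) (Fin M) ℝ) (j : Fin M ⊕ Fin 2) :
    ∑ k, B A k j = 0 := by
  cases j with
  | inl j =>
      simp [B, Fintype.sum_sum_type, Fin.sum_univ_two]
  | inr c =>
      fin_cases c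
      · simp [B, Fintype.sum_sum_type, Fin.sum_univ_two]
      · simp [B, Fintype.sum_sum_type, Fin.sum_univ_two]

end Tura

namespace Tura2
open Tura

variable {alph : Type} {M : ℕ}

def yv (A : alph → Matrix (Fin M) (Fin M) ℝ) (y0 : Fin M ⊕ Fin 2 → ℝ) (w : List alph) :
    Fin M ⊕ Fin 2 → ℝ :=
  w.foldl (fun v a => Matrix.vecMul v (B (A a))) y0

lemma yv_concat (A : alph → Matrix (Fin M) (Fin M) ℝ) (y0 : Fin M ⊕ Fin 2 → ℝ)
    (w : List alph) (a : alph) :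
    yv A y0 (w ++ [a]) = Matrix.vecMul (yv A y0 w) (B (A a)) := by
  simp [yv]

lemma yv_inr0 {A : alph → Matrix (Fin M) (Fin M) ℝ} {y0 : Fin M ⊕ Fin 2 → ℝ}
    (h0 : y0 (Sum.inr 0) = 0) : ∀ w, yv A y0 w (Sum.inr 0) = 0 := by
  intro w
  induction w using List.reverseRecOn with
  | nil => exact h0
  | append_singleton w a ih =>
      rw [yv_concat]
      have hB : ∀ k, B (A a) k (Sum.inr 0) = 0 := B_col0 _
      simp [Matrix.vecMul, dotProduct, hB]

lemma yv_sum {A : alph → Matrix (Fin M) (Fin M) ℝ} {y0 : Fin M ⊕ Fin 2 → ℝ}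
    (hs : ∑ k, y0 k = 0) : ∀ w, ∑ k, yv A y0 w k = 0 := by
  intro w
  induction w using List.reverseRecOn with
  | nil => exact hs
  | append_singleton w a ih =>
      rw [yv_concat]
      simp only [Matrix.vecMul, dotProduct]
      rw [Finset.sum_comm]
      simp_rw [← Finset.mul_sum, B_row, mul_zero, Finset.sum_const_zero]

lemma yv_inl {A : alph → Matrix (Fin M) (Fin M) ℝ} {y0 : Fin M ⊕ Fin 2 → ℝ}
    (x : List alph → Fin M → ℝ) (hx : ∀ w a, x (w ++ [a]) = Matrix.vecMul (x w) (A a))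
    (h0 : y0 (Sum.inr 0) = 0) (hb : ∀ i, y0 (Sum.inl i) = x [] i) :
    ∀ w i, yv A y0 w (Sum.inl i) = x w i := by
  intro w
  induction w using List.reverseRecOn with
  | nil => exact hb
  | append_singleton w a ih =>
      intro i
      rw [yv_concat, hx]
      simp only [Matrix.vecMul, dotProduct, Fintype.sum_sum_type, Fin.sum_univ_two]
      rw [yv_inr0 h0]
      simp [B, ih]

end Tura2

namespace Tura3
open Tura Tura2

set_option maxHeartbeats 3200000 in
theorem turakainen {alph : Type} [Fintype alph] (m : ℕ)
    (x : List alph → Fin (2*m) → ℝ)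
    (A : alph → Matrix (Fin (2*m)) (Fin (2*m)) ℝ)
    (hx : ∀ w a, x (w ++ [a]) = Matrix.vecMul (x w) (A a))
    (η : Fin (2*m) → ℝ) :
    ∃ P : PFA alph (2*m+2),
      ∀ w : List alph, P.accProb w > 1/2 ↔ dotProduct (x w) η > 0 := by
  classical
  set Nr : ℝ := 2*(m:ℝ)+2 with hNrdef
  have hNr : 0 < Nr := by positivity
  have hconst : ∀ c : ℝ, ∑ _k : Fin (2*m) ⊕ Fin 2, c = Nr * c := by
    intro c
    rw [Finset.sum_const, Finset.card_univ, nsmul_eq_mul, hNrdef]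
    simp only [Fintype.card_sum, Fintype.card_fin]
    push_cast
    ring
  -- initial extended vector
  set y0 : Fin (2*m) ⊕ Fin 2 → ℝ := Sum.elim (x []) ![0, -∑ i, x [] i] with hy0def
  have hy00 : y0 (Sum.inr 0) = 0 := by simp [hy0def]
  have hy0sum : ∑ k, y0 k = 0 := by
    simp [hy0def, Fintype.sum_sum_type, Fin.sum_univ_two]
  have hy0b : ∀ i, y0 (Sum.inl i) = x [] i := by intro i; simp [hy0def]
  -- constants
  set c0 : ℝ := 1 + ∑ k, |y0 k| with hc0def
  have hc0 : 0 < c0 := by positivity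
  have hc0k : ∀ k, |y0 k| ≤ c0 - 1 := by
    intro k
    have := Finset.single_le_sum (f := fun k => |y0 k|) (fun i _ => abs_nonneg _)
      (Finset.mem_univ k)
    simp only [hc0def]; linarith
  set π0 : Fin (2*m) ⊕ Fin 2 → ℝ := fun k => (y0 k + c0) / (c0 * Nr) with hπ0def
  have hπ0nn : ∀ k, 0 ≤ π0 k := by
    intro k
    have h1 := hc0k k
    have h2 := neg_abs_le (y0 k)
    apply div_nonneg _ (by positivity)
    linarith
  have hπ0sum : ∑ k, π0 k = 1 := by
    simp only [hπ0def]
    rw [← Finset.sum_div, Finset.sum_add_distrib, hy0sum, hconst]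
    field_simp
    ring
  clear_value y0 c0 π0
  -- transition constant
  set c1 : ℝ := 1 + ∑ a : alph, ∑ k, ∑ j, |B (A a) k j| with hc1def
  have hc1 : 0 < c1 := by positivity
  have hc1k : ∀ a k j, |B (A a) k j| ≤ c1 - 1 := by
    intro a k j
    have h1 : |B (A a) k j| ≤ ∑ j', |B (A a) k j'| :=
      Finset.single_le_sum (f := fun j' => |B (A a) k j'|) (fun i _ => abs_nonneg _)
        (Finset.mem_univ j)
    have h2 : ∑ j', |B (A a) k j'| ≤ ∑ k', ∑ j', |B (A a) k' j'| :=
      Finset.single_le_sum (f := fun k' => ∑ j', |B (A a) k' j'|)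
        (fun i _ => Finset.sum_nonneg fun _ _ => abs_nonneg _) (Finset.mem_univ k)
    have h3 : ∑ k', ∑ j', |B (A a) k' j'| ≤ ∑ a' : alph, ∑ k', ∑ j', |B (A a') k' j'| :=
      Finset.single_le_sum (f := fun a' => ∑ k', ∑ j', |B (A a') k' j'|)
        (fun i _ => Finset.sum_nonneg fun _ _ => Finset.sum_nonneg fun _ _ => abs_nonneg _)
        (Finset.mem_univ a)
    simp only [hc1def]; linarith
  set Pt : alph → Matrix (Fin (2*m) ⊕ Fin 2) (Fin (2*m) ⊕ Fin 2) ℝ :=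
    fun a => Matrix.of fun k j => (B (A a) k j + c1) / (c1 * Nr) with hPtdef
  have hPtnn : ∀ a k j, 0 ≤ Pt a k j := by
    intro a k j
    have h1 := hc1k a k j
    have h2 := neg_abs_le (B (A a) k j)
    apply div_nonneg _ (by positivity)
    linarith
  have hPtrow : ∀ a k, ∑ j, Pt a k j = 1 := by
    intro a k
    simp only [hPtdef, Matrix.of_apply]
    rw [← Finset.sum_div, Finset.sum_add_distrib, B_row, hconst]
    field_simp
    ring
  clear_value c1 Pt
  -- final functional
  set d : ℝ := -(∑ i, η i) / Nr with hddef
  set ηh : Fin (2*m) ⊕ Fin 2 → ℝ := fun k => Sum.elim η ![0,0] k + d with hηhdef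
  have hηhsum : ∑ k, ηh k = 0 := by
    simp only [hηhdef]
    rw [Finset.sum_add_distrib, hconst]
    simp [Fintype.sum_sum_type, Fin.sum_univ_two, hddef]
    field_simp
    ring
  clear_value d ηh
  set c2 : ℝ := 1 + ∑ k, |ηh k| with hc2def
  have hc2 : 0 < c2 := by rw [hc2def]; positivity
  have hc2k : ∀ k, |ηh k| ≤ c2 - 1 := by
    intro k
    have := Finset.single_le_sum (f := fun k => |ηh k|) (fun i _ => abs_nonneg _)
      (Finset.mem_univ k)
    simp only [hc2def]; linarith
  clear_value c2
  -- accepting vector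
  set f : Fin (2*m) ⊕ Fin 2 → ℝ :=
    Sum.elim (fun i : Fin (2*m) => if (i:ℕ) < m then (1:ℝ) else 0) ![1,0] with hfdef
  have hf01 : ∀ k, f k = 0 ∨ f k = 1 := by
    intro k
    rcases k with i | c
    · simp only [hfdef, Sum.elim_inl]
      split <;> simp
    · fin_cases c <;> simp [hfdef]
  have hfsum : ∑ k, f k = (m:ℝ) + 1 := by
    simp only [hfdef, Fintype.sum_sum_type, Fin.sum_univ_two, Sum.elim_inl, Sum.elim_inr,
      Matrix.cons_val_zero, Matrix.cons_val_one, Matrix.head_cons]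
    have hsub : Finset.range m ⊆ Finset.range (2*m) := by
      apply Finset.range_subset_range.2; omega
    rw [Fin.sum_univ_eq_sum_range (fun i => if i < m then (1:ℝ) else 0)]
    rw [← Finset.sum_subset hsub (by intro i hi hni; simp at hni ⊢; omega)]
    rw [Finset.sum_congr rfl (fun i hi => if_pos (Finset.mem_range.1 hi))]
    simp
  -- end-marker matrix
  set Pe : Matrix (Fin (2*m) ⊕ Fin 2) (Fin (2*m) ⊕ Fin 2) ℝ :=
    Matrix.of fun k j => ((2 * f j - 1) * ηh k + c2) / (c2 * Nr) with hPedef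
  have hPenn : ∀ k j, 0 ≤ Pe k j := by
    intro k j
    have h1 := hc2k k
    have h2 := neg_abs_le (ηh k)
    have h3 := abs_nonneg (ηh k)
    apply div_nonneg _ (by positivity)
    rcases hf01 j with h | h <;> rw [h] <;> nlinarith [le_abs_self (ηh k)]
  have hPerow : ∀ k, ∑ j, Pe k j = 1 := by
    intro k
    simp only [hPedef, Matrix.of_apply]
    rw [← Finset.sum_div]
    have : ∑ j, ((2 * f j - 1) * ηh k + c2) = (2 * ((m:ℝ)+1) - Nr) * ηh k + Nr * c2 := by
      rw [Finset.sum_add_distrib, hconst, ← Finset.sum_mul, Finset.sum_sub_distrib,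
        ← Finset.mul_sum, hfsum, hconst]
      ring
    rw [this]
    have : 2 * ((m:ℝ)+1) - Nr = 0 := by simp [hNrdef]; ring
    rw [this]
    field_simp
    ring
  clear_value f Pe
  -- main invariant: the reachable row vector is an affine image of the extended vector
  have hz : ∀ w : List alph, ∃ α : ℝ, 0 < α ∧
      Matrix.vecMul π0 ((w.map Pt).prod) = fun k => α * yv A y0 w k + Nr⁻¹ := by
    intro w
    induction w using List.reverseRecOn with
    | nil =>
        refine ⟨(c0*Nr)⁻¹, by positivity, ?_⟩
        simp only [List.map_nil, List.prod_nil, Matrix.vecMul_one]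
        funext k
        rw [hπ0def]
        show (y0 k + c0) / (c0 * Nr) = (c0*Nr)⁻¹ * y0 k + Nr⁻¹
        field_simp
    | append_singleton w a ih =>
        obtain ⟨α, hα, hzw⟩ := ih
        refine ⟨α/(c1*Nr), by positivity, ?_⟩
        have hprod : ((w++[a]).map Pt).prod = (w.map Pt).prod * Pt a := by simp
        rw [hprod, ← Matrix.vecMul_vecMul, hzw]
        funext j
        have hentry : ∀ k, Pt a k j = (B (A a) k j + c1)/(c1*Nr) := by
          intro k; rw [hPtdef]; rfl
        have hstep : Matrix.vecMul (fun k => α * yv A y0 w k + Nr⁻¹) (Pt a) j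
            = ∑ k, (α * yv A y0 w k + Nr⁻¹) * ((B (A a) k j + c1)/(c1*Nr)) := by
          simp only [Matrix.vecMul, dotProduct, hentry]
        rw [hstep]
        have hyj : yv A y0 (w++[a]) j = ∑ k, yv A y0 w k * B (A a) k j := by
          rw [yv_concat]; simp [Matrix.vecMul, dotProduct]
        calc ∑ k, (α * yv A y0 w k + Nr⁻¹) * ((B (A a) k j + c1)/(c1*Nr))
            = (∑ k, (α * (yv A y0 w k * B (A a) k j) + α * c1 * yv A y0 w k
                + Nr⁻¹ * B (A a) k j + Nr⁻¹ * c1)) / (c1*Nr) := by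
              rw [Finset.sum_div]
              exact Finset.sum_congr rfl fun k _ => by ring
          _ = (α * (∑ k, yv A y0 w k * B (A a) k j) + α * c1 * (∑ k, yv A y0 w k)
                + Nr⁻¹ * (∑ k, B (A a) k j) + Nr * (Nr⁻¹ * c1)) / (c1*Nr) := by
              rw [Finset.sum_add_distrib, Finset.sum_add_distrib, Finset.sum_add_distrib,
                ← Finset.mul_sum, ← Finset.mul_sum, ← Finset.mul_sum, hconst]
          _ = α/(c1*Nr) * yv A y0 (w++[a]) j + Nr⁻¹ := by
              rw [← hyj, yv_sum hy0sum, B_col, mul_zero, mul_zero, add_zero, add_zero]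
              field_simp
  -- assemble the PFA via the reindexing equivalence
  set e : (Fin (2*m) ⊕ Fin 2) ≃ Fin (2*m+2) := finSumFinEquiv with hedef
  refine ⟨⟨π0 ∘ e.symm, fun a => (Pt a).submatrix e.symm e.symm, Pe.submatrix e.symm e.symm,
      f ∘ e.symm, fun i => hπ0nn _, (Equiv.sum_comp e.symm π0).trans hπ0sum,
      fun a => ⟨fun i j => hPtnn a _ _,
        fun i => (Equiv.sum_comp e.symm (fun j => Pt a (e.symm i) j)).trans (hPtrow a _)⟩,
      ⟨fun i j => hPenn _ _,
        fun i => (Equiv.sum_comp e.symm (fun j => Pe (e.symm i) j)).trans (hPerow _)⟩,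
      fun i => hf01 _⟩, fun w => ?_⟩
  have hprodglue : ((w.map fun a => (Pt a).submatrix e.symm e.symm)).prod
      = ((w.map Pt).prod).submatrix e.symm e.symm := by
    induction w with
    | nil => simp [Matrix.submatrix_one_equiv]
    | cons a w ih => simp only [List.map_cons, List.prod_cons, ih, Matrix.submatrix_mul_equiv]
  have hacc : PFA.accProb ⟨π0 ∘ e.symm, fun a => (Pt a).submatrix e.symm e.symm,
      Pe.submatrix e.symm e.symm, f ∘ e.symm, fun i => hπ0nn _,
      (Equiv.sum_comp e.symm π0).trans hπ0sum,
      fun a => ⟨fun i j => hPtnn a _ _,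
        fun i => (Equiv.sum_comp e.symm (fun j => Pt a (e.symm i) j)).trans (hPtrow a _)⟩,
      ⟨fun i j => hPenn _ _,
        fun i => (Equiv.sum_comp e.symm (fun j => Pe (e.symm i) j)).trans (hPerow _)⟩,
      fun i => hf01 _⟩ w
      = dotProduct (Matrix.vecMul π0 ((w.map Pt).prod * Pe)) f := by
    show dotProduct (Matrix.vecMul (π0 ∘ e.symm)
        (((w.map fun a => (Pt a).submatrix e.symm e.symm)).prod * Pe.submatrix e.symm e.symm))
        (f ∘ e.symm) = _
    rw [hprodglue, Matrix.submatrix_mul_equiv]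
    have hvm : Matrix.vecMul (π0 ∘ e.symm) (((w.map Pt).prod * Pe).submatrix e.symm e.symm)
        = (Matrix.vecMul π0 ((w.map Pt).prod * Pe)) ∘ e.symm := by
      funext j
      simp only [Matrix.vecMul, dotProduct, Matrix.submatrix_apply, Function.comp]
      exact Equiv.sum_comp e.symm (fun k => π0 k * ((w.map Pt).prod * Pe) k (e.symm j))
    rw [hvm]
    exact Equiv.sum_comp e.symm (fun k => Matrix.vecMul π0 ((w.map Pt).prod * Pe) k * f k)
  rw [hacc]
  obtain ⟨α, hα, hzw⟩ := hz w
  rw [← Matrix.vecMul_vecMul, hzw, ← Matrix.dotProduct_mulVec]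
  have hPef : Pe.mulVec f = fun k => ((m:ℝ)+1) * (ηh k + c2) / (c2*Nr) := by
    funext k
    have hentry : ∀ j, Pe k j = ((2*f j - 1)*ηh k + c2)/(c2*Nr) := fun j => by rw [hPedef]; rfl
    simp only [Matrix.mulVec, dotProduct, hentry]
    calc ∑ j, ((2*f j - 1)*ηh k + c2)/(c2*Nr) * f j
        = (∑ j, (ηh k * ((2*f j - 1)*f j) + c2 * f j)) / (c2*Nr) := by
          rw [Finset.sum_div]
          exact Finset.sum_congr rfl fun j _ => by ring
      _ = (ηh k * (∑ j, (2*f j-1)*f j) + c2 * (∑ j, f j))/(c2*Nr) := by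
          rw [Finset.sum_add_distrib, ← Finset.mul_sum, ← Finset.mul_sum]
      _ = ((m:ℝ)+1) * (ηh k + c2) / (c2*Nr) := by
          have h1 : ∑ j, (2*f j-1)*f j = ∑ j, f j :=
            Finset.sum_congr rfl fun j _ => by rcases hf01 j with h|h <;> rw [h] <;> ring
          rw [h1, hfsum]
          ring_nf
  rw [hPef]
  have hyeta : ∑ k, yv A y0 w k * ηh k = dotProduct (x w) η := by
    have hk : ∀ k, ηh k = Sum.elim η ![0,0] k + d := fun k => by rw [hηhdef]
    simp only [hk]
    have hsplit : ∑ k, yv A y0 w k * (Sum.elim η ![0,0] k + d)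
        = ∑ k, yv A y0 w k * Sum.elim η ![0,0] k + d * ∑ k, yv A y0 w k := by
      rw [Finset.mul_sum, ← Finset.sum_add_distrib]
      exact Finset.sum_congr rfl fun k _ => by ring
    rw [hsplit, yv_sum hy0sum, mul_zero, add_zero, Fintype.sum_sum_type]
    simp only [Sum.elim_inl, Sum.elim_inr, Fin.sum_univ_two, Matrix.cons_val_zero,
      Matrix.cons_val_one, Matrix.head_cons, mul_zero, add_zero]
    simp only [dotProduct]
    exact Finset.sum_congr rfl fun i _ => by rw [yv_inl x hx hy00 hy0b]
  have hfinal : dotProduct (fun k => α * yv A y0 w k + Nr⁻¹)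
      (fun k => ((m:ℝ)+1) * (ηh k + c2) / (c2*Nr))
      = 1/2 + (((m:ℝ)+1) * α / (c2*Nr)) * dotProduct (x w) η := by
    simp only [dotProduct]
    calc ∑ k, (α * yv A y0 w k + Nr⁻¹) * (((m:ℝ)+1) * (ηh k + c2) / (c2*Nr))
        = (∑ k, (((m:ℝ)+1) * α * (yv A y0 w k * ηh k) + ((m:ℝ)+1)*c2*α* yv A y0 w k
            + ((m:ℝ)+1)*Nr⁻¹* ηh k + ((m:ℝ)+1)*Nr⁻¹*c2)) / (c2*Nr) := by
          rw [Finset.sum_div]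
          exact Finset.sum_congr rfl fun k _ => by ring
      _ = (((m:ℝ)+1) * α * (∑ k, yv A y0 w k * ηh k) + ((m:ℝ)+1)*c2*α*(∑ k, yv A y0 w k)
            + ((m:ℝ)+1)*Nr⁻¹*(∑ k, ηh k) + Nr * (((m:ℝ)+1)*Nr⁻¹*c2)) / (c2*Nr) := by
          rw [Finset.sum_add_distrib, Finset.sum_add_distrib, Finset.sum_add_distrib,
            ← Finset.mul_sum, ← Finset.mul_sum, ← Finset.mul_sum, hconst]
      _ = 1/2 + (((m:ℝ)+1) * α / (c2*Nr)) * dotProduct (x w) η := by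
          rw [hyeta, yv_sum hy0sum, hηhsum, mul_zero, mul_zero, add_zero, add_zero, hNrdef]
          field_simp
          ring
  rw [hfinal]
  have hcoef : 0 < ((m:ℝ)+1) * α / (c2*Nr) := by positivity
  constructor
  · intro h; nlinarith
  · intro h; nlinarith

end Tura3

namespace Qside

variable {alph : Type} {n : ℕ}

/-- The pure-state "density" vector `v_w(i,j) = ψ_i conj ψ_j`. -/
noncomputable def qv (Q : MOQFA alph n) (w : List alph) : (Fin n × Fin n) → ℂ :=
  fun p => Q.state w p.1 * (starRingEnd ℂ) (Q.state w p.2)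

/-- The (row-vector) transition matrix on the density side. -/
noncomputable def qT (Q : MOQFA alph n) (a : alph) :
    Matrix (Fin n × Fin n) (Fin n × Fin n) ℂ :=
  Matrix.of fun q p => Q.U a p.1 q.1 * (starRingEnd ℂ) (Q.U a p.2 q.2)

lemma state_concat (Q : MOQFA alph n) (w : List alph) (a : alph) :
    Q.state (w ++ [a]) = (Q.U a).mulVec (Q.state w) := by
  simp [MOQFA.state]

lemma qv_concat (Q : MOQFA alph n) (w : List alph) (a : alph) :
    qv Q (w ++ [a]) = Matrix.vecMul (qv Q w) (qT Q a) := by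
  funext p
  simp only [qv, state_concat, Matrix.vecMul, dotProduct, Matrix.mulVec, qT,
    Matrix.of_apply, Fintype.sum_prod_type]
  rw [map_sum, Finset.sum_mul_sum]
  exact Finset.sum_congr rfl fun k _ => Finset.sum_congr rfl fun l _ => by
    simp only [map_mul]
    ring

lemma qv_trace (Q : MOQFA alph n) (w : List alph) :
    ∑ i, qv Q w (i, i) = 1 := by
  induction w using List.reverseRecOn with
  | nil =>
      rw [← Q.unit]
      simp only [qv, MOQFA.state, List.foldl_nil, dotProduct, Pi.star_apply, RCLike.star_def]
      exact Finset.sum_congr rfl fun i _ => by ring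
  | append_singleton w a ih =>
      have hU := (Q.unitary a).1
      calc ∑ i, qv Q (w ++ [a]) (i, i)
          = ∑ i, ∑ k, ∑ l, qv Q w (k, l) * (Q.U a i k * (starRingEnd ℂ) (Q.U a i l)) := by
            refine Finset.sum_congr rfl fun i _ => ?_
            rw [qv_concat]
            simp only [Matrix.vecMul, dotProduct, qT, Matrix.of_apply,
              Fintype.sum_prod_type]
        _ = ∑ k, ∑ l, qv Q w (k, l) * ((Q.U a)ᴴ * Q.U a) l k := by
            rw [Finset.sum_comm]
            refine Finset.sum_congr rfl fun k _ => ?_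
            rw [Finset.sum_comm]
            refine Finset.sum_congr rfl fun l _ => ?_
            rw [← Finset.mul_sum]
            congr 1
            simp only [Matrix.mul_apply, Matrix.conjTranspose_apply, RCLike.star_def]
            exact Finset.sum_congr rfl fun i _ => by ring
        _ = ∑ k, qv Q w (k, k) := by
            rw [hU]
            simp [Matrix.one_apply]
        _ = 1 := ih

/-- The complex linear functional giving `accProb - lam`. -/
noncomputable def qh (Q : MOQFA alph n) (lam : ℝ) : (Fin n × Fin n) → ℂ :=
  fun p => Q.Pacc p.2 p.1 - if p.1 = p.2 then (lam:ℂ) else 0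

lemma qv_acc (Q : MOQFA alph n) (lam : ℝ) (w : List alph) :
    Q.accProb w - lam = (∑ p, qv Q w p * qh Q lam p).re := by
  have h1 : ∑ p : Fin n × Fin n, qv Q w p * qh Q lam p
      = (∑ p : Fin n × Fin n, qv Q w p * Q.Pacc p.2 p.1) - lam := by
    simp only [qh, mul_sub]
    rw [Finset.sum_sub_distrib]
    congr 1
    calc ∑ p : Fin n × Fin n, qv Q w p * (if p.1 = p.2 then (lam:ℂ) else 0)
        = ∑ i, ∑ j, qv Q w (i, j) * (if i = j then (lam:ℂ) else 0) := by
          rw [Fintype.sum_prod_type]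
      _ = ∑ i, qv Q w (i, i) * lam := by
          refine Finset.sum_congr rfl fun i _ => ?_
          rw [Finset.sum_eq_single i (fun j _ hj => by simp [Ne.symm hj]) (by simp)]
          simp
      _ = (lam:ℂ) := by rw [← Finset.sum_mul, qv_trace, one_mul]
  have h2 : ∑ p : Fin n × Fin n, qv Q w p * Q.Pacc p.2 p.1
      = dotProduct (star (Q.state w)) (Q.Pacc.mulVec (Q.state w)) := by
    simp only [dotProduct, Matrix.mulVec, Pi.star_apply, RCLike.star_def,
      Fintype.sum_prod_type, qv, Finset.mul_sum]
    rw [Finset.sum_comm]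
    exact Finset.sum_congr rfl fun i _ => Finset.sum_congr rfl fun j _ => by ring
  rw [h1, h2, Complex.sub_re, Complex.ofReal_re, MOQFA.accProb]

end Qside

namespace Qside2
open Qside

variable {alph : Type} {n : ℕ}

/-- Real encoding of the density vector. -/
noncomputable def qx (Q : MOQFA alph n) (w : List alph) : ((Fin n × Fin n) × Fin 2) → ℝ :=
  fun pc => ![(qv Q w pc.1).re, (qv Q w pc.1).im] pc.2

/-- Real encoding of the transition matrix. -/
noncomputable def qA (Q : MOQFA alph n) (a : alph) :
    Matrix ((Fin n × Fin n) × Fin 2) ((Fin n × Fin n) × Fin 2) ℝ :=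
  Matrix.of fun qd pc =>
    ![![(qT Q a qd.1 pc.1).re, (qT Q a qd.1 pc.1).im],
      ![-(qT Q a qd.1 pc.1).im, (qT Q a qd.1 pc.1).re]] qd.2 pc.2

lemma qx_concat (Q : MOQFA alph n) (w : List alph) (a : alph) :
    qx Q (w ++ [a]) = Matrix.vecMul (qx Q w) (qA Q a) := by
  funext pc
  obtain ⟨p, c⟩ := pc
  have hv : qv Q (w ++ [a]) p = ∑ q, qv Q w q * qT Q a q p := by
    rw [qv_concat]
    simp [Matrix.vecMul, dotProduct]
  have hR : Matrix.vecMul (qx Q w) (qA Q a) (p, c)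
      = ∑ q, (qx Q w (q, 0) * qA Q a (q, 0) (p, c) + qx Q w (q, 1) * qA Q a (q, 1) (p, c)) := by
    simp [Matrix.vecMul, dotProduct, Fintype.sum_prod_type, Fin.sum_univ_two]
  rw [hR]
  fin_cases c
  · show (qv Q (w ++ [a]) p).re = _
    rw [hv, Complex.re_sum]
    refine Finset.sum_congr rfl fun q _ => ?_
    simp [qx, qA, Complex.mul_re]
    ring
  · show (qv Q (w ++ [a]) p).im = _
    rw [hv, Complex.im_sum]
    refine Finset.sum_congr rfl fun q _ => ?_
    simp [qx, qA, Complex.mul_im]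

/-- Real encoding of the final functional. -/
noncomputable def qeta (Q : MOQFA alph n) (lam : ℝ) : ((Fin n × Fin n) × Fin 2) → ℝ :=
  fun pc => ![(qh Q lam pc.1).re, -(qh Q lam pc.1).im] pc.2

lemma qx_dot (Q : MOQFA alph n) (lam : ℝ) (w : List alph) :
    dotProduct (qx Q w) (qeta Q lam) = Q.accProb w - lam := by
  rw [qv_acc Q lam w, Complex.re_sum]
  simp only [dotProduct, Fintype.sum_prod_type, Fin.sum_univ_two]
  refine Finset.sum_congr rfl fun p _ => ?_
  simp [qx, qeta, Complex.mul_re]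
  simp only [← sub_eq_add_neg]
  rw [← Finset.sum_sub_distrib]

end Qside2



set_option maxHeartbeats 1600000 in
/-- every `n`-dimensional MO-1QFA with strict cutpoint `λ` is simulated, with
strict cutpoint `1/2`, by a one-way PFA with at most `2n²+6` states over the same alphabet. -/
theorem moqfa_simulation_upper (n : ℕ) (hn : 2 ≤ n) (alph : Type) [Fintype alph]
    (Q : MOQFA alph n) (lam : ℝ) :
    ∃ (m : ℕ) (P : PFA alph m), m ≤ 2 * n ^ 2 + 6 ∧
      ∀ w : List alph, P.accProb w > 1 / 2 ↔ Q.accProb w > lam := by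
  classical
  have e : ((Fin n × Fin n) × Fin 2) ≃ Fin (2*(n*n)) :=
    ((Equiv.prodCongr finProdFinEquiv (Equiv.refl (Fin 2))).trans finProdFinEquiv).trans
      (finCongr (by ring))
  have hx' : ∀ (w : List alph) (a : alph),
      (fun w => Qside2.qx Q w ∘ e.symm) (w ++ [a])
        = Matrix.vecMul ((fun w => Qside2.qx Q w ∘ e.symm) w)
            ((fun a => (Qside2.qA Q a).submatrix e.symm e.symm) a) := by
    intro w a
    funext j
    show Qside2.qx Q (w ++ [a]) (e.symm j) = _
    rw [Qside2.qx_concat]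
    show Matrix.vecMul (Qside2.qx Q w) (Qside2.qA Q a) (e.symm j) = _
    simp only [Matrix.vecMul, dotProduct, Matrix.submatrix_apply, Function.comp]
    exact (Equiv.sum_comp e.symm fun k => Qside2.qx Q w k * Qside2.qA Q a k (e.symm j)).symm
  obtain ⟨P, hP⟩ := Tura3.turakainen (n*n) (fun w => Qside2.qx Q w ∘ e.symm)
    (fun a => (Qside2.qA Q a).submatrix e.symm e.symm) hx' (Qside2.qeta Q lam ∘ e.symm)
  refine ⟨2*(n*n)+2, P, ?_, fun w => ?_⟩
  · rw [pow_two]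
    linarith
  · rw [hP w]
    have hdot : dotProduct (Qside2.qx Q w ∘ e.symm) (Qside2.qeta Q lam ∘ e.symm)
        = Q.accProb w - lam := by
      rw [← Qside2.qx_dot Q lam w]
      exact Equiv.sum_comp e.symm fun k => Qside2.qx Q w k * Qside2.qeta Q lam k
    rw [hdot]
    constructor <;> intro h <;> linarith
end

section
/- Let P and K be n×n complex matrices with K skew-Hermitian (K† = −K) and with operator norm ‖P‖ ≤ 1, and let t ≥ 0. Then, with [A,B] = AB − BA and exp the matrix exponential, ‖exp(−tK)·P·exp(tK) − P − t[P,K] − (t²/2)[[P,K],K]‖ ≤ (4/3)·t³·‖K‖³, where ‖·‖ denotes the operator norm induced by the Euclidean norm on ℂⁿ. -/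
open scoped Matrix Matrix.Norms.L2Operator

namespace ConjTaylorAux
open NormedSpace Set

variable {n : ℕ}

noncomputable def cg (K A : Matrix (Fin n) (Fin n) ℂ) (s : ℝ) : Matrix (Fin n) (Fin n) ℂ :=
  exp ((-s) • K) * A * exp (s • K)

lemma expK_hasDerivAt (K : Matrix (Fin n) (Fin n) ℂ) (s : ℝ) :
    HasDerivAt (fun u : ℝ => exp (u • K)) (exp (s • K) * K) s := by
  exact hasDerivAt_exp_smul_const K s

lemma expK_neg_hasDerivAt (K : Matrix (Fin n) (Fin n) ℂ) (s : ℝ) :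
    HasDerivAt (fun u : ℝ => exp ((-u) • K)) (-(exp ((-s) • K) * K)) s := by
  have h := HasDerivAt.scomp s (expK_hasDerivAt K (-s)) (hasDerivAt_neg s)
  simpa [Function.comp_def] using h

lemma commK (K : Matrix (Fin n) (Fin n) ℂ) (s : ℝ) :
    K * exp (s • K) = exp (s • K) * K :=
  ((((Commute.refl K).smul_right s).exp_right).symm.eq).symm

lemma cg_hasDerivAt (K A : Matrix (Fin n) (Fin n) ℂ) (s : ℝ) :
    HasDerivAt (cg K A) (cg K (A * K - K * A) s) s := by
  have h := ((expK_neg_hasDerivAt K s).mul_const A).mul (expK_hasDerivAt K s)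
  refine h.congr_deriv ?_
  unfold cg
  rw [← commK K s]
  noncomm_ring

lemma cg_zero (K A : Matrix (Fin n) (Fin n) ℂ) : cg K A 0 = A := by
  simp [cg]

lemma norm_expK_le_one (K : Matrix (Fin n) (Fin n) ℂ) (hK : Kᴴ = -K) (s : ℝ) :
    ‖exp (s • K)‖ ≤ 1 := by
  have hct : (exp (s • K))ᴴ = exp ((-s) • K) := by
    rw [← Matrix.exp_conjTranspose]
    congr 1
    rw [Matrix.conjTranspose_smul, hK]
    simp
  have hcomm : Commute ((-s) • K) (s • K) := ((Commute.refl K).smul_left (-s)).smul_right s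
  have hUU : (exp (s • K))ᴴ * exp (s • K) = 1 := by
    rw [hct, ← Matrix.exp_add_of_commute _ _ hcomm]
    simp [← add_smul]
  have h1 : ‖(1 : Matrix (Fin n) (Fin n) ℂ)‖ ≤ 1 := by
    have := CStarRing.norm_star_mul_self (x := (1 : Matrix (Fin n) (Fin n) ℂ))
    simp only [star_one, one_mul] at this
    nlinarith [norm_nonneg (1 : Matrix (Fin n) (Fin n) ℂ)]
  have h2 := CStarRing.norm_star_mul_self (x := exp (s • K))
  rw [Matrix.star_eq_conjTranspose, hUU] at h2
  nlinarith [norm_nonneg (exp (s • K))]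

lemma cg_norm_le (K : Matrix (Fin n) (Fin n) ℂ) (hK : Kᴴ = -K)
    (A : Matrix (Fin n) (Fin n) ℂ) (s : ℝ) : ‖cg K A s‖ ≤ ‖A‖ := by
  have h1 : ‖exp ((-s) • K)‖ ≤ 1 := norm_expK_le_one K hK (-s)
  have h2 : ‖exp (s • K)‖ ≤ 1 := norm_expK_le_one K hK s
  calc ‖cg K A s‖ ≤ ‖exp ((-s) • K) * A‖ * ‖exp (s • K)‖ := norm_mul_le _ _
    _ ≤ ‖exp ((-s) • K)‖ * ‖A‖ * ‖exp (s • K)‖ := by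
        gcongr; exact norm_mul_le _ _
    _ ≤ 1 * ‖A‖ * 1 := by
        have hAnn : 0 ≤ ‖A‖ := norm_nonneg _
        have h2' : 0 ≤ ‖exp (s • K)‖ := norm_nonneg _
        have step := mul_le_mul_of_nonneg_right
          (mul_le_mul_of_nonneg_right h1 hAnn) h2'
        have step2 : 1 * ‖A‖ * ‖exp (s • K)‖ ≤ 1 * ‖A‖ * 1 :=
          mul_le_mul_of_nonneg_left h2 (by positivity)
        linarith
    _ = ‖A‖ := by ring

lemma comm_norm_le (K A : Matrix (Fin n) (Fin n) ℂ) :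
    ‖A * K - K * A‖ ≤ 2 * ‖A‖ * ‖K‖ := by
  calc ‖A * K - K * A‖ ≤ ‖A * K‖ + ‖K * A‖ := norm_sub_le _ _
    _ ≤ ‖A‖ * ‖K‖ + ‖K‖ * ‖A‖ := add_le_add (norm_mul_le _ _) (norm_mul_le _ _)
    _ = 2 * ‖A‖ * ‖K‖ := by ring

end ConjTaylorAux

open ConjTaylorAux Set in
/-- Taylor remainder bound: for `K` skew-Hermitian, `‖P‖ ≤ 1`, and `t ≥ 0`,
`‖e^{-tK} P e^{tK} − P − t[P,K] − (t²/2)[[P,K],K]‖ ≤ (4/3) t³ ‖K‖³` in the operator norm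
induced by the Euclidean norm on `ℂⁿ`. -/
theorem conjugation_taylor_bound (n : ℕ) (P K : Matrix (Fin n) (Fin n) ℂ)
    (hK : Kᴴ = -K) (hP : ‖P‖ ≤ 1) (t : ℝ) (ht : 0 ≤ t) :
    ‖NormedSpace.exp ((-t : ℝ) • K) * P * NormedSpace.exp (t • K) - P
        - t • (P * K - K * P)
        - (t ^ 2 / 2) • ((P * K - K * P) * K - K * (P * K - K * P))‖
      ≤ 4 / 3 * t ^ 3 * ‖K‖ ^ 3 := by
  set A1 := P * K - K * P with hA1
  set A2 := A1 * K - K * A1 with hA2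
  set A3 := A2 * K - K * A2 with hA3
  set C := ‖A3‖ with hC
  have hCnn : 0 ≤ C := norm_nonneg _
  -- Step 1: ‖cg K A2 s - A2‖ ≤ C * s on [0, t]
  have step1 : ∀ x ∈ Icc (0:ℝ) t, ‖cg K A2 x - A2‖ ≤ C * x := by
    have hf' : ∀ x : ℝ, HasDerivAt (fun s => cg K A2 s - A2) (cg K A3 x) x :=
      fun x => (cg_hasDerivAt K A2 x).sub_const A2
    intro x hx
    have := image_norm_le_of_norm_deriv_right_le_deriv_boundary
      (f := fun s => cg K A2 s - A2) (f' := fun s => cg K A3 s) (a := 0) (b := t)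
      (B := fun s => C * s) (B' := fun _ => C)
      (Continuous.continuousOn (by
        exact continuous_iff_continuousAt.2 fun x => (hf' x).continuousAt))
      (fun x _ => (hf' x).hasDerivWithinAt)
      (by simp [cg_zero])
      (fun x => by simpa using (hasDerivAt_id x).const_mul C)
      (fun x _ => cg_norm_le K hK A3 x)
    exact this hx
  -- Step 2: ‖cg K A1 s - A1 - s • A2‖ ≤ C * (s^2/2) on [0, t]
  have step2 : ∀ x ∈ Icc (0:ℝ) t, ‖cg K A1 x - A1 - x • A2‖ ≤ C * (x ^ 2 / 2) := by
    have hf' : ∀ x : ℝ, HasDerivAt (fun s => cg K A1 s - A1 - s • A2)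
        (cg K A2 x - A2) x := by
      intro x
      have h1 : HasDerivAt (fun s : ℝ => s • A2) ((1:ℝ) • A2) x :=
        (hasDerivAt_id x).smul_const A2
      exact (((cg_hasDerivAt K A1 x).sub_const A1).sub h1).congr_deriv (by simp [hA2])
    have hB : ∀ x : ℝ, HasDerivAt (fun s : ℝ => C * (s ^ 2 / 2)) (C * x) x := by
      intro x
      have := ((hasDerivAt_pow 2 x).div_const 2).const_mul C
      refine this.congr_deriv ?_
      push_cast
      ring
    intro x hx
    have := image_norm_le_of_norm_deriv_right_le_deriv_boundary
      (f := fun s => cg K A1 s - A1 - s • A2) (f' := fun s => cg K A2 s - A2) (a := 0) (b := t)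
      (B := fun s => C * (s ^ 2 / 2)) (B' := fun s => C * s)
      (Continuous.continuousOn (by
        exact continuous_iff_continuousAt.2 fun x => (hf' x).continuousAt))
      (fun x _ => (hf' x).hasDerivWithinAt)
      (by simp [cg_zero])
      hB
      (fun x hxI => step1 x (Ico_subset_Icc_self hxI))
    exact this hx
  -- Step 3: ‖cg K P s - P - s • A1 - (s^2/2) • A2‖ ≤ C * (s^3/6) on [0, t]
  have step3 : ∀ x ∈ Icc (0:ℝ) t,
      ‖cg K P x - P - x • A1 - (x ^ 2 / 2) • A2‖ ≤ C * (x ^ 3 / 6) := by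
    have hf' : ∀ x : ℝ, HasDerivAt (fun s => cg K P s - P - s • A1 - (s ^ 2 / 2) • A2)
        (cg K A1 x - A1 - x • A2) x := by
      intro x
      have h1 : HasDerivAt (fun s : ℝ => s • A1) ((1:ℝ) • A1) x :=
        (hasDerivAt_id x).smul_const A1
      have h2 : HasDerivAt (fun s : ℝ => (s ^ 2 / 2) • A2) (x • A2) x := by
        have := ((hasDerivAt_pow 2 x).div_const 2).smul_const A2
        refine this.congr_deriv ?_
        push_cast
        rw [pow_one]
        congr 1
        ring
      exact ((((cg_hasDerivAt K P x).sub_const P).sub h1).sub h2).congr_deriv (by simp [hA1])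
    have hB : ∀ x : ℝ, HasDerivAt (fun s : ℝ => C * (s ^ 3 / 6)) (C * (x ^ 2 / 2)) x := by
      intro x
      have := ((hasDerivAt_pow 3 x).div_const 6).const_mul C
      refine this.congr_deriv ?_
      push_cast
      ring
    intro x hx
    have := image_norm_le_of_norm_deriv_right_le_deriv_boundary
      (f := fun s => cg K P s - P - s • A1 - (s ^ 2 / 2) • A2)
      (f' := fun s => cg K A1 s - A1 - s • A2) (a := 0) (b := t)
      (B := fun s => C * (s ^ 3 / 6)) (B' := fun s => C * (s ^ 2 / 2))
      (Continuous.continuousOn (by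
        exact continuous_iff_continuousAt.2 fun x => (hf' x).continuousAt))
      (fun x _ => (hf' x).hasDerivWithinAt)
      (by simp [cg_zero])
      hB
      (fun x hxI => step2 x (Ico_subset_Icc_self hxI))
    exact this hx
  -- bound C
  have hK0 : 0 ≤ ‖K‖ := norm_nonneg _
  have hA1n : ‖A1‖ ≤ 2 * ‖K‖ := by
    calc ‖A1‖ ≤ 2 * ‖P‖ * ‖K‖ := comm_norm_le K P
      _ ≤ 2 * ‖K‖ := by nlinarith
  have hA2n : ‖A2‖ ≤ 4 * ‖K‖ ^ 2 := by
    calc ‖A2‖ ≤ 2 * ‖A1‖ * ‖K‖ := comm_norm_le K A1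
      _ ≤ 4 * ‖K‖ ^ 2 := by nlinarith
  have hA3n : C ≤ 8 * ‖K‖ ^ 3 := by
    calc C ≤ 2 * ‖A2‖ * ‖K‖ := comm_norm_le K A2
      _ ≤ 8 * ‖K‖ ^ 3 := by nlinarith [norm_nonneg A2]
  have hfinal := step3 t ⟨ht, le_rfl⟩
  rw [cg] at hfinal
  calc ‖NormedSpace.exp ((-t : ℝ) • K) * P * NormedSpace.exp (t • K) - P
        - t • A1 - (t ^ 2 / 2) • A2‖ ≤ C * (t ^ 3 / 6) := hfinal
    _ ≤ 8 * ‖K‖ ^ 3 * (t ^ 3 / 6) := by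
        have h3 : 0 ≤ t ^ 3 / 6 := by positivity
        nlinarith
    _ = 4 / 3 * t ^ 3 * ‖K‖ ^ 3 := by ring
end

section
/- Let Σ be a finite alphabet, L ⊆ Σ* a language, and X, Y finite sets of words over Σ. Define the sign matrix S ∈ {−1,+1}^{X×Y} by S_{x,y} = +1 if the concatenation xy belongs to L and S_{x,y} = −1 otherwise. If some one-way probabilistic finite automaton with m states recognizes L with a strict cutpoint μ ∈ ℝ, then the sign-rank of S is at most m. -/
open scoped Matrix

/-- The sign-rank of a real matrix `S` with `±1` entries: the minimum rank of a real
matrix `R` with `S_{x,y} · R_{x,y} > 0` for all entries. -/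
noncomputable def signRank {X Y : Type} [Fintype X] [Fintype Y] (S : Matrix X Y ℝ) : ℕ :=
  sInf {r | ∃ R : Matrix X Y ℝ, (∀ x y, 0 < S x y * R x y) ∧ R.rank = r}

lemma sum_vecMul_stoch {m : ℕ} {M : Matrix (Fin m) (Fin m) ℝ} (hM : RowStochastic M)
    (v : Fin m → ℝ) : ∑ j, Matrix.vecMul v M j = ∑ i, v i := by
  simp only [Matrix.vecMul, dotProduct]
  rw [Finset.sum_comm]
  simp [← Finset.mul_sum, hM.2]

lemma sum_vecMul_prod {m : ℕ} (ms : List (Matrix (Fin m) (Fin m) ℝ))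
    (h : ∀ M ∈ ms, RowStochastic M) (v : Fin m → ℝ) :
    ∑ j, Matrix.vecMul v ms.prod j = ∑ i, v i := by
  induction ms generalizing v with
  | nil => simp
  | cons a t ih =>
    rw [List.prod_cons, ← Matrix.vecMul_vecMul,
      ih (fun M hM => h M (List.mem_cons_of_mem _ hM)),
      sum_vecMul_stoch (h a List.mem_cons_self)]

/-- if an `m`-state PFA recognizes `L` with a strict cutpoint `μ`, then for
all finite prefix/suffix sets `X, Y` the induced `±1` sign matrix of `L` on `X × Y` has
sign-rank at most `m`. -/
theorem pfa_signrank_bound (alph : Type) [Fintype alph] (L : Set (List alph))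
    [DecidablePred (· ∈ L)] (X Y : Finset (List alph))
    (m : ℕ) (P : PFA alph m) (μ : ℝ)
    (hrec : ∀ w : List alph, w ∈ L ↔ P.accProb w > μ) :
    signRank (fun (x : X) (y : Y) =>
      if ((x : List alph) ++ (y : List alph)) ∈ L then (1 : ℝ) else -1) ≤ m := by
  classical
  set g : X × Y → ℝ := fun p => P.accProb ((p.1 : List alph) ++ (p.2 : List alph)) - μ with hg
  set T : Finset (X × Y) :=
    Finset.univ.filter (fun p : X × Y => ((p.1 : List alph) ++ (p.2 : List alph)) ∈ L) with hT
  obtain ⟨ε, hε0, hεle⟩ : ∃ ε : ℝ, 0 < ε ∧ ∀ p ∈ T, ε ≤ g p := by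
    rcases T.eq_empty_or_nonempty with h | h
    · exact ⟨1, one_pos, by simp [h]⟩
    · refine ⟨T.inf' h g, ?_, fun p hp => Finset.inf'_le _ hp⟩
      rw [Finset.lt_inf'_iff]
      intro p hp
      have hpL : ((p.1 : List alph) ++ (p.2 : List alph)) ∈ L := by
        simpa [hT] using hp
      have := (hrec _).1 hpL
      simpa [hg] using sub_pos.mpr this
  set A : Matrix X (Fin m) ℝ :=
    fun x i => Matrix.vecMul P.init (((x : List alph)).map P.trans).prod i with hA
  set B : Matrix (Fin m) Y ℝ :=
    fun i y => Matrix.mulVec ((((y : List alph)).map P.trans).prod * P.endm) P.acc i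
      - (μ + ε / 2) with hB
  have sumA : ∀ x : X, ∑ i, A x i = 1 := by
    intro x
    rw [hA]
    simp only
    rw [sum_vecMul_prod _ (by
      intro M hM
      rcases List.mem_map.1 hM with ⟨a, _, rfl⟩
      exact P.trans_stoch a), P.init_sum]
  have split : ∀ (x : X) (y : Y),
      P.accProb ((x : List alph) ++ (y : List alph))
        = ∑ i, A x i * Matrix.mulVec ((((y : List alph)).map P.trans).prod * P.endm) P.acc i := by
    intro x y
    unfold PFA.accProb
    rw [List.map_append, List.prod_append]
    rw [show (((x : List alph)).map P.trans).prod * (((y : List alph)).map P.trans).prod * P.endm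
        = (((x : List alph)).map P.trans).prod * ((((y : List alph)).map P.trans).prod * P.endm)
      from mul_assoc _ _ _, ← Matrix.vecMul_vecMul, ← Matrix.dotProduct_mulVec]
    rfl
  have key : ∀ (x : X) (y : Y),
      (A * B) x y = P.accProb ((x : List alph) ++ (y : List alph)) - (μ + ε / 2) := by
    intro x y
    rw [split x y]
    simp only [Matrix.mul_apply]
    simp only [hB]
    simp only [mul_sub]
    rw [Finset.sum_sub_distrib, ← Finset.sum_mul, sumA x, one_mul]
  have hsign : ∀ (x : X) (y : Y),
      0 < (if ((x : List alph) ++ (y : List alph)) ∈ L then (1 : ℝ) else -1) * (A * B) x y := by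
    intro x y
    rw [key x y]
    by_cases hL : ((x : List alph) ++ (y : List alph)) ∈ L
    · rw [if_pos hL, one_mul]
      have hmem : (x, y) ∈ T := by simp [hT, hL]
      have := hεle _ hmem
      simp only [hg] at this
      linarith
    · rw [if_neg hL, neg_one_mul, neg_pos]
      have : ¬ P.accProb ((x : List alph) ++ (y : List alph)) > μ := fun h => hL ((hrec _).2 h)
      push_neg at this
      linarith
  have hrank : (A * B).rank ≤ m :=
    le_trans (Matrix.rank_mul_le_right A B)
      (le_trans (Matrix.rank_le_card_height B) (by simp))
  exact le_trans (Nat.sInf_le ⟨A * B, hsign, rfl⟩) hrank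
end

section
/- For every d ≥ 1, the complete shattering matrix 𝖢_d ∈ {−1,+1}^{[d]×{−1,+1}^d}, defined by (𝖢_d)_{j,η} = η_j for j ∈ {1,…,d} and η ∈ {−1,+1}^d, has sign-rank exactly d. -/
open scoped Matrix

private lemma rank_of_sign (d : ℕ) (R : Matrix (Fin d) (Fin d → Bool) ℝ)
    (hR : ∀ x y, 0 < (if y x then (1 : ℝ) else -1) * R x y) :
    R.rank = d := by
  have hli : LinearIndependent ℝ R := by
    refine Fintype.linearIndependent_iff.mpr ?_
    intro c hc j
    by_contra hcj
    set η : Fin d → Bool := fun i => decide (0 < c i) with hη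
    have hterm : ∀ i, 0 ≤ c i * R i η := by
      intro i
      rcases lt_trichotomy (c i) 0 with h | h | h
      · have hfalse : η i = false := by simp [hη, not_lt.mpr h.le]
        have := hR i η
        rw [hfalse] at this
        simp only [Bool.false_eq_true, if_false] at this
        rw [neg_one_mul, neg_pos] at this
        exact (mul_pos_of_neg_of_neg h this).le
      · simp [h]
      · have htrue : η i = true := by simp [hη, h]
        have := hR i η
        rw [htrue] at this
        simp only [if_true, one_mul] at this
        positivity
    have hpos : 0 < c j * R j η := by
      rcases lt_trichotomy (c j) 0 with h | h | h
      · have hfalse : η j = false := by simp [hη, not_lt.mpr h.le]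
        have := hR j η
        rw [hfalse] at this
        simp only [Bool.false_eq_true, if_false] at this
        rw [neg_one_mul, neg_pos] at this
        exact mul_pos_of_neg_of_neg h this
      · exact absurd h hcj
      · have htrue : η j = true := by simp [hη, h]
        have := hR j η
        rw [htrue] at this
        simp only [if_true, one_mul] at this
        positivity
    have hsum : ∑ i, c i * R i η = 0 := by
      have := congrFun hc η
      simpa using this
    have : 0 < ∑ i, c i * R i η :=
      Finset.sum_pos' (fun i _ => hterm i) ⟨j, Finset.mem_univ j, hpos⟩
    linarith
  have := hli.rank_matrix
  simpa using this

/-- the complete shattering matrix `𝖢_d`, whose columns (indexed by all sign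
patterns `η ∈ {±1}^d`, encoded by Boolean vectors) list every sign pattern on `d` rows,
has sign-rank exactly `d`. -/
theorem complete_shattering_signrank (d : ℕ) (hd : 1 ≤ d) :
    signRank (fun (j : Fin d) (η : Fin d → Bool) =>
      if η j then (1 : ℝ) else -1) = d := by
  unfold signRank
  have hset : {r | ∃ R : Matrix (Fin d) (Fin d → Bool) ℝ,
      (∀ x y, 0 < (if y x then (1 : ℝ) else -1) * R x y) ∧ R.rank = r} = {d} := by
    have hmem : ∃ R : Matrix (Fin d) (Fin d → Bool) ℝ,
        (∀ x y, 0 < (if y x then (1 : ℝ) else -1) * R x y) ∧ R.rank = d := by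
      refine ⟨fun j η => if η j then (1 : ℝ) else -1, ?_, ?_⟩
      · intro x y
        by_cases h : y x <;> simp [h]
      · exact rank_of_sign d _ (fun x y => by by_cases h : y x <;> simp [h])
    ext r
    constructor
    · rintro ⟨R, hR, rfl⟩
      exact rank_of_sign d R hR
    · rintro rfl
      exact hmem
  rw [hset, csInf_singleton]
end

section
/- Let n ≥ 1, let X and Y be finite index sets, let (ρ_x)_{x∈X} be n×n complex positive semidefinite matrices with trace 1, let (E_y)_{y∈Y} be n×n Hermitian matrices with 0 ⪯ E_y ⪯ I, and let λ ∈ ℝ. Define the sign matrix S ∈ {−1,+1}^{X×Y} by S_{x,y} = +1 if Tr(E_y ρ_x) > λ and S_{x,y} = −1 otherwise. Then the sign-rank of S is at most n². -/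
open scoped Matrix ComplexOrder

/-!
Only finitely many values `Tr(E_y ρ_x)` lie above `λ`, so some `c > λ` separates them exactly as
`λ` does, and the real matrix `Tr(E_y ρ_x) - c = Re Tr(ρ_x (E_y - c I))` (using `Tr ρ_x = 1`) has
the sign pattern `S`. The real trace form on Hermitian matrices is a dot product in `n²` real
coordinates, so this matrix factors through `ℝ^{n²}` and has rank at most `n²`.
-/

open Filter Topology

lemma exists_gt_forall_lt_of_lt {α ι : Type*} [LinearOrder α] [TopologicalSpace α]
    [OrderTopology α] [DenselyOrdered α] [NoMaxOrder α] [Finite ι] (f : ι → α) (a : α) :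
    ∃ c, a < c ∧ ∀ i, a < f i → c < f i := by
  have hf : ∀ᶠ c in 𝓝[>] a, ∀ i, a < f i → c < f i :=
    eventually_all.2 fun _ => eventually_imp_distrib_left.2 fun h =>
      eventually_nhdsWithin_of_eventually_nhds (eventually_lt_nhds h)
  exact (eventually_mem_nhdsWithin.and hf).exists

namespace Matrix

variable {m : Type*} [Fintype m]

/-- Real coordinates of a Hermitian matrix: the entry at `(i, j)` together with the one at
`(j, i)` recovers `M i j`, since `M j i = conj (M i j)`. -/
def hermCoord (M : Matrix m m ℂ) (p : m × m) : ℝ :=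
  (M p.1 p.2).re + (M p.1 p.2).im

lemma IsHermitian.re_trace_mul_eq_sum_hermCoord {M N : Matrix m m ℂ} (hM : M.IsHermitian)
    (hN : N.IsHermitian) :
    (M * N).trace.re = ∑ p, hermCoord M p * hermCoord N p := by
  set f : m → m → ℝ := fun i j => (M i j * N j i).re
  set g : m → m → ℝ := fun i j => hermCoord M (i, j) * hermCoord N (i, j)
  -- the two sums agree after symmetrising in `(i, j)`, not termwise
  have hsymm : ∀ i j, f i j + f j i = g i j + g j i := by
    intro i j
    simp only [f, g, hermCoord, ← hM.apply i j, ← hN.apply i j, Complex.mul_re,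
      Complex.star_def, Complex.conj_re, Complex.conj_im]
    ring
  have hsum : ∑ i, ∑ j, f i j = ∑ i, ∑ j, g i j := by
    have := Finset.sum_congr rfl fun i (_ : i ∈ Finset.univ) =>
      Finset.sum_congr rfl fun j (_ : j ∈ Finset.univ) => hsymm i j
    simp only [Finset.sum_add_distrib] at this
    rw [Finset.sum_comm (f := fun i j => f j i), Finset.sum_comm (f := fun i j => g j i)] at this
    linarith
  rw [Fintype.sum_prod_type, ← hsum, trace, Complex.re_sum]
  simp only [diag_apply, mul_apply, Complex.re_sum, f]

end Matrix

open Matrix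

lemma rank_re_trace_mul_sub_le {X Y n : Type*} [Fintype Y] [Fintype n] [DecidableEq n]
    {ρ : X → Matrix n n ℂ} (hρ : ∀ x, (ρ x).IsHermitian) (hρ1 : ∀ x, (ρ x).trace = 1)
    {E : Y → Matrix n n ℂ} (hE : ∀ y, (E y).IsHermitian) (c : ℝ) :
    (of fun x y => (E y * ρ x).trace.re - c).rank ≤ Fintype.card n ^ 2 := by
  have hF : ∀ y, (E y - (c : ℂ) • 1).IsHermitian := fun y =>
    (hE y).sub (by simp [IsHermitian, conjTranspose_smul])
  have hfactor : (of fun x y => (E y * ρ x).trace.re - c) =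
      of (fun x p => hermCoord (ρ x) p) * of (fun p y => hermCoord (E y - (c : ℂ) • 1) p) := by
    ext x y
    simp only [mul_apply, of_apply]
    rw [← (hρ x).re_trace_mul_eq_sum_hermCoord (hF y), mul_sub, trace_sub, trace_mul_comm,
      Matrix.mul_smul, mul_one, trace_smul, hρ1 x]
    simp
  rw [hfactor]
  calc _ ≤ _ := rank_mul_le_left _ _
    _ ≤ Fintype.card (n × n) := rank_le_card_width _
    _ = Fintype.card n ^ 2 := by rw [Fintype.card_prod, sq]

section

variable {X Y : Type} [Fintype X] [Fintype Y]

lemma signRank_le_rank {S R : Matrix X Y ℝ} (h : ∀ x y, 0 < S x y * R x y) :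
    signRank S ≤ R.rank :=
  Nat.sInf_le ⟨R, h, rfl⟩

lemma signRank_threshold_le (T : Matrix X Y ℝ) (lam : ℝ) {r : ℕ}
    (h : ∀ c, lam < c → (of fun x y => T x y - c).rank ≤ r) :
    signRank (fun x y => if lam < T x y then (1 : ℝ) else -1) ≤ r := by
  obtain ⟨c, hlc, hc⟩ := exists_gt_forall_lt_of_lt (fun p : X × Y => T p.1 p.2) lam
  refine (signRank_le_rank fun x y => ?_).trans (h c hlc)
  by_cases hxy : lam < T x y
  · simpa [hxy] using hc (x, y) hxy
  · simp only [hxy, if_false, of_apply]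
    linarith

end

theorem quantum_signrank_bound_general (n : ℕ) (X Y : Type) [Fintype X] [Fintype Y]
    (ρ : X → Matrix (Fin n) (Fin n) ℂ)
    (hρ : ∀ x, (ρ x).PosSemidef ∧ (ρ x).trace = 1)
    (E : Y → Matrix (Fin n) (Fin n) ℂ)
    (hE : ∀ y, (E y).IsHermitian ∧ (E y).PosSemidef ∧
      ((1 : Matrix (Fin n) (Fin n) ℂ) - E y).PosSemidef)
    (lam : ℝ) :
    signRank (fun (x : X) (y : Y) =>
      if lam < (Matrix.trace (E y * ρ x)).re then (1 : ℝ) else -1) ≤ n ^ 2 := by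
  refine signRank_threshold_le (fun x y => (E y * ρ x).trace.re) lam fun c _ => ?_
  simpa using rank_re_trace_mul_sub_le (fun x => (hρ x).1.isHermitian) (fun x => (hρ x).2)
    (fun y => (hE y).1) c

/-- the strict-cutpoint sign matrix of quantum acceptance probabilities
`Tr(E_y ρ_x)` for `n`-dimensional density matrices `ρ_x` and effects `E_y` has sign-rank
at most `n²`. -/
theorem quantum_signrank_bound (n : ℕ) (hn : 1 ≤ n) (X Y : Type) [Fintype X] [Fintype Y]
    (ρ : X → Matrix (Fin n) (Fin n) ℂ)
    (hρ : ∀ x, (ρ x).PosSemidef ∧ (ρ x).trace = 1)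
    (E : Y → Matrix (Fin n) (Fin n) ℂ)
    (hE : ∀ y, (E y).IsHermitian ∧ (E y).PosSemidef ∧
      ((1 : Matrix (Fin n) (Fin n) ℂ) - E y).PosSemidef)
    (lam : ℝ) :
    signRank (fun (x : X) (y : Y) =>
      if lam < (Matrix.trace (E y * ρ x)).re then (1 : ℝ) else -1) ≤ n ^ 2 :=
  quantum_signrank_bound_general n X Y ρ hρ E hE lam
end
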